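/- arXiv:1709.09284 — 11 statements merged into one kernel-verified Lean document; each statement's English description precedes it below -/
import Mathlib

section
/- Let (Y,D) and (Y0,Y1) be pairs of {0,1}-valued random variables on a common probability space such that Y = Y1·D + Y0·(1−D), and the selection rule holds: Y1 > Y0 implies D = 1 and Y0 > Y1 implies D = 0. Then P(Y0=1, Y1=0) ≤ P(Y=1, D=0), P(Y0=0, Y1=1) ≤ P(Y=1, D=1), and P(Y0=0, Y1=0) = P(Y=0). -/
open MeasureTheory

/-- Sharp bounds (validity direction) for the binary Roy model. -/
theorem binary_roy_bounds
    {Ω : Type*} [MeasurableSpace Ω] (μ : Measure Ω) [IsProbabilityMeasure μ]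
    (Y D Y0 Y1 : Ω → ℝ)
    (hYbin : ∀ ω, Y ω = 0 ∨ Y ω = 1)
    (hDbin : ∀ ω, D ω = 0 ∨ D ω = 1)
    (hY0bin : ∀ ω, Y0 ω = 0 ∨ Y0 ω = 1)
    (hY1bin : ∀ ω, Y1 ω = 0 ∨ Y1 ω = 1)
    (hout : ∀ ω, Y ω = Y1 ω * D ω + Y0 ω * (1 - D ω))
    (hsel1 : ∀ ω, Y1 ω > Y0 ω → D ω = 1)
    (hsel0 : ∀ ω, Y0 ω > Y1 ω → D ω = 0) :
    μ {ω | Y0 ω = 1 ∧ Y1 ω = 0} ≤ μ {ω | Y ω = 1 ∧ D ω = 0} ∧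
    μ {ω | Y0 ω = 0 ∧ Y1 ω = 1} ≤ μ {ω | Y ω = 1 ∧ D ω = 1} ∧
    μ {ω | Y0 ω = 0 ∧ Y1 ω = 0} = μ {ω | Y ω = 0} := by
  refine ⟨measure_mono ?_, measure_mono ?_, congrArg μ (Set.ext ?_)⟩
  · rintro ω ⟨h0, h1⟩
    have hD : D ω = 0 := hsel0 ω (by rw [h0, h1]; norm_num)
    exact ⟨by rw [hout ω, h0, h1, hD]; ring, hD⟩
  · rintro ω ⟨h0, h1⟩
    have hD : D ω = 1 := hsel1 ω (by rw [h0, h1]; norm_num)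
    exact ⟨by rw [hout ω, h0, h1, hD]; ring, hD⟩
  · intro ω
    constructor
    · rintro ⟨h0, h1⟩
      show Y ω = 0
      rw [hout ω, h0, h1]; ring
    · intro hY
      have h := hout ω
      rw [hY] at h
      rcases hDbin ω with hD | hD <;> rw [hD] at h <;>
        rcases hY0bin ω with h0 | h0 <;> rcases hY1bin ω with h1 | h1 <;>
        rw [h0, h1] at h <;> norm_num at h
      · exact ⟨h0, h1⟩
      · exact absurd (hsel1 ω (by rw [h0, h1]; norm_num)) (by rw [hD]; norm_num)
      · exact ⟨h0, h1⟩
      · exact absurd (hsel0 ω (by rw [h0, h1]; norm_num)) (by rw [hD]; norm_num)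
end

section
/- Fix nonnegative reals q00, q01, q10, q11 summing to 1 (the probability mass function of a {0,1}²-valued pair (Y,D)). If a vector (p00, p01, p10) ∈ ℝ³ satisfies 0 ≤ p10 ≤ q10, 0 ≤ p01 ≤ q11, and p00 = q00 + q01, then there exists a probability space carrying random variables (Y, D, Y0, Y1), all {0,1}-valued, with P(Y=i, D=j) = q_{ij} for all i,j, such that Y = Y1·D + Y0·(1−D), Y1 > Y0 ⇒ D = 1, Y0 > Y1 ⇒ D = 0, and P(Y0=0,Y1=0) = p00, P(Y0=0,Y1=1) = p01, P(Y0=1,Y1=0) = p10. -/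
open MeasureTheory

/-- Sharpness of the binary Roy model bounds: any `(p00, p01, p10)` satisfying the
bounds can be rationalized by a binary Roy model with observable law `q`. -/
theorem binary_roy_sharpness
    (q00 q01 q10 q11 p00 p01 p10 : ℝ)
    (hq00 : 0 ≤ q00) (hq01 : 0 ≤ q01) (hq10 : 0 ≤ q10) (hq11 : 0 ≤ q11)
    (hqsum : q00 + q01 + q10 + q11 = 1)
    (hp10nn : 0 ≤ p10) (hp10 : p10 ≤ q10)
    (hp01nn : 0 ≤ p01) (hp01 : p01 ≤ q11)
    (hp00 : p00 = q00 + q01) :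
    ∃ (Ω : Type) (_ : MeasurableSpace Ω) (μ : Measure Ω),
      IsProbabilityMeasure μ ∧
      ∃ Y D Y0 Y1 : Ω → ℝ,
        (∀ ω, Y ω = 0 ∨ Y ω = 1) ∧ (∀ ω, D ω = 0 ∨ D ω = 1) ∧
        (∀ ω, Y0 ω = 0 ∨ Y0 ω = 1) ∧ (∀ ω, Y1 ω = 0 ∨ Y1 ω = 1) ∧
        (μ {ω | Y ω = 0 ∧ D ω = 0}).toReal = q00 ∧
        (μ {ω | Y ω = 0 ∧ D ω = 1}).toReal = q01 ∧
        (μ {ω | Y ω = 1 ∧ D ω = 0}).toReal = q10 ∧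
        (μ {ω | Y ω = 1 ∧ D ω = 1}).toReal = q11 ∧
        (∀ ω, Y ω = Y1 ω * D ω + Y0 ω * (1 - D ω)) ∧
        (∀ ω, Y1 ω > Y0 ω → D ω = 1) ∧
        (∀ ω, Y0 ω > Y1 ω → D ω = 0) ∧
        (μ {ω | Y0 ω = 0 ∧ Y1 ω = 0}).toReal = p00 ∧
        (μ {ω | Y0 ω = 0 ∧ Y1 ω = 1}).toReal = p01 ∧
        (μ {ω | Y0 ω = 1 ∧ Y1 ω = 0}).toReal = p10 := by
  have h1 : (0:ℝ) ≤ q10 - p10 := by linarith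
  have h2 : (0:ℝ) ≤ q11 - p01 := by linarith
  set v : Fin 6 → ℝ := fun i =>
    if i = 0 then q00 else if i = 1 then q01 else if i = 2 then p10
    else if i = 3 then q10 - p10 else if i = 4 then p01 else q11 - p01 with hv
  set μ : Measure (Fin 6) := ∑ i, ENNReal.ofReal (v i) • Measure.dirac i with hμ
  have happ : ∀ s : Set (Fin 6), μ s = ∑ i, ENNReal.ofReal (v i) * s.indicator 1 i := by
    intro s
    simp [hμ, Measure.finset_sum_apply, Measure.dirac_apply]
  refine ⟨Fin 6, inferInstance, μ, ?_,
    (fun i => if i = 0 ∨ i = 1 then (0:ℝ) else 1),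
    (fun i => if i = 0 ∨ i = 2 ∨ i = 3 then (0:ℝ) else 1),
    (fun i => if i = 2 ∨ i = 3 ∨ i = 5 then (1:ℝ) else 0),
    (fun i => if i = 3 ∨ i = 4 ∨ i = 5 then (1:ℝ) else 0),
    ?_, ?_, ?_, ?_, ?_, ?_, ?_, ?_, ?_, ?_, ?_, ?_, ?_, ?_⟩
  · constructor
    rw [happ, Fin.sum_univ_six]
    simp [hv]
    rw [← ENNReal.ofReal_add hq00 hq01, ← ENNReal.ofReal_add (by linarith) hp10nn,
      ← ENNReal.ofReal_add (by linarith) h1, ← ENNReal.ofReal_add (by linarith) hp01nn,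
      ← ENNReal.ofReal_add (by linarith) h2]
    have : q00 + q01 + p10 + (q10 - p10) + p01 + (q11 - p01) = 1 := by linarith
    rw [this, ENNReal.ofReal_one]
  · intro ω; fin_cases ω <;> simp
  · intro ω; fin_cases ω <;> simp
  · intro ω; fin_cases ω <;> simp
  · intro ω; fin_cases ω <;> simp
  · have hs : {ω : Fin 6 | (if ω = 0 ∨ ω = 1 then (0:ℝ) else 1) = 0 ∧ (if ω = 0 ∨ ω = 2 ∨ ω = 3 then (0:ℝ) else 1) = 0} = {0} := by
      ext ω; fin_cases ω <;> simp
    rw [hs, happ, Fin.sum_univ_six]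
    simp [hv, Set.indicator_apply, ENNReal.toReal_ofReal hq00]
  · have hs : {ω : Fin 6 | (if ω = 0 ∨ ω = 1 then (0:ℝ) else 1) = 0 ∧ (if ω = 0 ∨ ω = 2 ∨ ω = 3 then (0:ℝ) else 1) = 1} = {1} := by
      ext ω; fin_cases ω <;> simp
    rw [hs, happ, Fin.sum_univ_six]
    simp [hv, Set.indicator_apply, ENNReal.toReal_ofReal hq01]
  · have hs : {ω : Fin 6 | (if ω = 0 ∨ ω = 1 then (0:ℝ) else 1) = 1 ∧ (if ω = 0 ∨ ω = 2 ∨ ω = 3 then (0:ℝ) else 1) = 0} = {2, 3} := by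
      ext ω; fin_cases ω <;> simp
    rw [hs, happ, Fin.sum_univ_six]
    simp [hv, Set.indicator_apply]
    rw [← ENNReal.ofReal_add hp10nn h1, ENNReal.toReal_ofReal (by linarith)]
    ring
  · have hs : {ω : Fin 6 | (if ω = 0 ∨ ω = 1 then (0:ℝ) else 1) = 1 ∧ (if ω = 0 ∨ ω = 2 ∨ ω = 3 then (0:ℝ) else 1) = 1} = {4, 5} := by
      ext ω; fin_cases ω <;> simp
    rw [hs, happ, Fin.sum_univ_six]
    simp [hv, Set.indicator_apply]
    rw [← ENNReal.ofReal_add hp01nn h2, ENNReal.toReal_ofReal (by linarith)]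
    ring
  · intro ω; fin_cases ω <;> simp
  · intro ω; fin_cases ω <;> simp
  · intro ω; fin_cases ω <;> simp
  · have hs : {ω : Fin 6 | (if ω = 2 ∨ ω = 3 ∨ ω = 5 then (1:ℝ) else 0) = 0 ∧ (if ω = 3 ∨ ω = 4 ∨ ω = 5 then (1:ℝ) else 0) = 0} = {0, 1} := by
      ext ω; fin_cases ω <;> simp
    rw [hs, happ, Fin.sum_univ_six]
    simp [hv, Set.indicator_apply]
    rw [← ENNReal.ofReal_add hq00 hq01, ENNReal.toReal_ofReal (by linarith)]
    linarith
  · have hs : {ω : Fin 6 | (if ω = 2 ∨ ω = 3 ∨ ω = 5 then (1:ℝ) else 0) = 0 ∧ (if ω = 3 ∨ ω = 4 ∨ ω = 5 then (1:ℝ) else 0) = 1} = {4} := by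
      ext ω; fin_cases ω <;> simp
    rw [hs, happ, Fin.sum_univ_six]
    simp [hv, Set.indicator_apply, ENNReal.toReal_ofReal hp01nn]
  · have hs : {ω : Fin 6 | (if ω = 2 ∨ ω = 3 ∨ ω = 5 then (1:ℝ) else 0) = 1 ∧ (if ω = 3 ∨ ω = 4 ∨ ω = 5 then (1:ℝ) else 0) = 0} = {2} := by
      ext ω; fin_cases ω <;> simp
    rw [hs, happ, Fin.sum_univ_six]
    simp [hv, Set.indicator_apply, ENNReal.toReal_ofReal hp10nn]
end

section
/- Suppose Y* = Y1*·D + Y0*·(1−D) for real-valued latent variables (Y0*, Y1*), with D ∈ {0,1} satisfying Y1* > Y0* ⇒ D = 1 and Y0* > Y1* ⇒ D = 0, and let Yd = 1{Yd* > 0} for d = 0,1 and Y = 1{Y* > 0}. Then P(Y0=1, Y1=0) ≤ P(Y=1, D=0), P(Y0=0, Y1=1) ≤ P(Y=1, D=1), and P(Y0=0, Y1=0) = P(Y=0). -/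
open MeasureTheory

/-- Bounds for the alternative (censored / latent-variable) binary Roy model. -/
theorem alt_binary_roy_bounds
    {Ω : Type*} [MeasurableSpace Ω] (μ : Measure Ω) [IsProbabilityMeasure μ]
    (Y0s Y1s D : Ω → ℝ)
    (hDbin : ∀ ω, D ω = 0 ∨ D ω = 1)
    (hsel1 : ∀ ω, Y1s ω > Y0s ω → D ω = 1)
    (hsel0 : ∀ ω, Y0s ω > Y1s ω → D ω = 0) :
    let Ys : Ω → ℝ := fun ω => Y1s ω * D ω + Y0s ω * (1 - D ω)
    let Y0 : Ω → ℝ := fun ω => if Y0s ω > 0 then 1 else 0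
    let Y1 : Ω → ℝ := fun ω => if Y1s ω > 0 then 1 else 0
    let Y : Ω → ℝ := fun ω => if Ys ω > 0 then 1 else 0
    μ {ω | Y0 ω = 1 ∧ Y1 ω = 0} ≤ μ {ω | Y ω = 1 ∧ D ω = 0} ∧
    μ {ω | Y0 ω = 0 ∧ Y1 ω = 1} ≤ μ {ω | Y ω = 1 ∧ D ω = 1} ∧
    μ {ω | Y0 ω = 0 ∧ Y1 ω = 0} = μ {ω | Y ω = 0} := by
  intro Ys Y0 Y1 Y
  have hYs0 : ∀ ω, D ω = 0 → Ys ω = Y0s ω := by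
    intro ω h; simp [Ys, h]
  have hYs1 : ∀ ω, D ω = 1 → Ys ω = Y1s ω := by
    intro ω h; simp [Ys, h]
  refine ⟨?_, ?_, ?_⟩
  · apply measure_mono
    intro ω hω
    simp only [Set.mem_setOf_eq, Y0, Y1, Y] at hω ⊢
    rcases hω with ⟨h0, h1⟩
    split_ifs at h0 h1 with p0 p1 p2
    · norm_num at h1
    · have hD : D ω = 0 := hsel0 ω (by linarith [not_lt.mp p1])
      have := hYs0 ω hD
      constructor
      · rw [if_pos (by rw [this]; exact p0)]
      · exact hD
    · norm_num at h0
    · norm_num at h0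
  · apply measure_mono
    intro ω hω
    simp only [Set.mem_setOf_eq, Y0, Y1, Y] at hω ⊢
    rcases hω with ⟨h0, h1⟩
    split_ifs at h0 h1 with p0 p1 p2
    · norm_num at h0
    · norm_num at h1
    · have hD : D ω = 1 := hsel1 ω (by linarith [not_lt.mp p0])
      have := hYs1 ω hD
      constructor
      · rw [if_pos (by rw [this]; exact p2)]
      · exact hD
    · norm_num at h1
  · congr 1
    ext ω
    simp only [Set.mem_setOf_eq, Y0, Y1, Y]
    constructor
    · rintro ⟨h0, h1⟩
      split_ifs at h0 h1 with p0 p1 p2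
      · norm_num at h0
      · norm_num at h0
      · norm_num at h1
      · rcases hDbin ω with hD | hD
        · rw [if_neg (by rw [hYs0 ω hD]; exact p0)]
        · rw [if_neg (by rw [hYs1 ω hD]; exact p2)]
    · intro h
      split_ifs at h with p
      · norm_num at h
      · rcases hDbin ω with hD | hD
        · have h0 : ¬ Y0s ω > 0 := by rw [← hYs0 ω hD]; exact p
          have h1 : ¬ Y1s ω > 0 := by
            intro h1
            exact h0 (lt_of_lt_of_le h1 (not_lt.mp (fun hc => by simp [hsel1 ω hc] at hD)))
          simp [h0, h1]
        · have h1 : ¬ Y1s ω > 0 := by rw [← hYs1 ω hD]; exact p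
          have h0 : ¬ Y0s ω > 0 := by
            intro h0
            exact h1 (lt_of_lt_of_le h0 (not_lt.mp (fun hc => by simp [hsel0 ω hc] at hD)))
          simp [h0, h1]
end

section
/- Fix nonnegative reals q00, q01, q10, q11 summing to 1. If nonnegative reals p00, p01, p10, p11 sum to 1 and satisfy p11 ≤ q10 + q11, p00 ≤ q00 + q01, p10 ≤ q10 + q01, p01 ≤ q00 + q11, q10 ≤ p10 + p11 ≤ 1 − q00, and q11 ≤ p01 + p11 ≤ 1 − q01, then there exist {0,1}-valued random variables (Y, D, Y0, Y1) on some probability space with P(Y=i,D=j) = q_{ij}, P(Y0=k,Y1=l) = p_{kl} for all i,j,k,l, and Y = Y1·D + Y0·(1−D). -/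
open MeasureTheory


open Classical in
lemma sum_dirac_apply {n : ℕ} (v : Fin n → ℝ) (hv : ∀ i, 0 ≤ v i) (S : Set (Fin n)) :
    ((∑ i, ENNReal.ofReal (v i) • (@Measure.dirac (Fin n) ⊤ i)) S).toReal
      = ∑ i, if i ∈ S then v i else 0 := by
  have hS : MeasurableSet[⊤] S := trivial
  rw [Measure.finset_sum_apply, ENNReal.toReal_sum]
  · refine Finset.sum_congr rfl fun i _ => ?_
    rw [Measure.smul_apply, smul_eq_mul, Measure.dirac_apply' _ hS]
    by_cases h : i ∈ S
    · simp [h, Set.indicator_of_mem, ENNReal.toReal_ofReal (hv i)]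
    · simp [h]
  · intro i _
    rw [Measure.smul_apply, smul_eq_mul, Measure.dirac_apply' _ hS]
    exact ENNReal.mul_ne_top ENNReal.ofReal_ne_top (by by_cases h : i ∈ S <;> simp [h])

lemma vec8_0 {α : Type*} (a b c d e f g h : α) : ![a,b,c,d,e,f,g,h] 0 = a := rfl
lemma vec8_1 {α : Type*} (a b c d e f g h : α) : ![a,b,c,d,e,f,g,h] 1 = b := rfl
lemma vec8_2 {α : Type*} (a b c d e f g h : α) : ![a,b,c,d,e,f,g,h] 2 = c := rfl
lemma vec8_3 {α : Type*} (a b c d e f g h : α) : ![a,b,c,d,e,f,g,h] 3 = d := rfl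
lemma vec8_4 {α : Type*} (a b c d e f g h : α) : ![a,b,c,d,e,f,g,h] 4 = e := rfl
lemma vec8_5 {α : Type*} (a b c d e f g h : α) : ![a,b,c,d,e,f,g,h] 5 = f := rfl
lemma vec8_6 {α : Type*} (a b c d e f g h : α) : ![a,b,c,d,e,f,g,h] 6 = g := rfl
lemma vec8_7 {α : Type*} (a b c d e f g h : α) : ![a,b,c,d,e,f,g,h] 7 = h := rfl

lemma vec8m_0 {α : Type*} (a b c d e f g h : α) (hk : (0:ℕ) < 8) : ![a,b,c,d,e,f,g,h] ⟨0,hk⟩ = a := rfl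
lemma vec8m_1 {α : Type*} (a b c d e f g h : α) (hk : (1:ℕ) < 8) : ![a,b,c,d,e,f,g,h] ⟨1,hk⟩ = b := rfl
lemma vec8m_2 {α : Type*} (a b c d e f g h : α) (hk : (2:ℕ) < 8) : ![a,b,c,d,e,f,g,h] ⟨2,hk⟩ = c := rfl
lemma vec8m_3 {α : Type*} (a b c d e f g h : α) (hk : (3:ℕ) < 8) : ![a,b,c,d,e,f,g,h] ⟨3,hk⟩ = d := rfl
lemma vec8m_4 {α : Type*} (a b c d e f g h : α) (hk : (4:ℕ) < 8) : ![a,b,c,d,e,f,g,h] ⟨4,hk⟩ = e := rfl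
lemma vec8m_5 {α : Type*} (a b c d e f g h : α) (hk : (5:ℕ) < 8) : ![a,b,c,d,e,f,g,h] ⟨5,hk⟩ = f := rfl
lemma vec8m_6 {α : Type*} (a b c d e f g h : α) (hk : (6:ℕ) < 8) : ![a,b,c,d,e,f,g,h] ⟨6,hk⟩ = g := rfl
lemma vec8m_7 {α : Type*} (a b c d e f g h : α) (hk : (7:ℕ) < 8) : ![a,b,c,d,e,f,g,h] ⟨7,hk⟩ = h := rfl

/-- Sharpness of the generalized binary Roy model bounds: any potential-outcome mass
function `p` satisfying the six inequalities can be rationalized, with observable mass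
function `q`, via `Y = Y1·D + Y0·(1−D)` with no selection restriction. -/
theorem gen_binary_roy_sharpness
    (q00 q01 q10 q11 p00 p01 p10 p11 : ℝ)
    (hq00 : 0 ≤ q00) (hq01 : 0 ≤ q01) (hq10 : 0 ≤ q10) (hq11 : 0 ≤ q11)
    (hqsum : q00 + q01 + q10 + q11 = 1)
    (hp00 : 0 ≤ p00) (hp01 : 0 ≤ p01) (hp10 : 0 ≤ p10) (hp11 : 0 ≤ p11)
    (hpsum : p00 + p01 + p10 + p11 = 1)
    (h1 : p11 ≤ q10 + q11) (h2 : p00 ≤ q00 + q01)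
    (h3 : p10 ≤ q10 + q01) (h4 : p01 ≤ q00 + q11)
    (h5 : q10 ≤ p10 + p11) (h6 : p10 + p11 ≤ 1 - q00)
    (h7 : q11 ≤ p01 + p11) (h8 : p01 + p11 ≤ 1 - q01) :
    ∃ (Ω : Type) (_ : MeasurableSpace Ω) (μ : Measure Ω),
      IsProbabilityMeasure μ ∧
      ∃ Y D Y0 Y1 : Ω → ℝ,
        (∀ ω, Y ω = 0 ∨ Y ω = 1) ∧ (∀ ω, D ω = 0 ∨ D ω = 1) ∧
        (∀ ω, Y0 ω = 0 ∨ Y0 ω = 1) ∧ (∀ ω, Y1 ω = 0 ∨ Y1 ω = 1) ∧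
        (μ {ω | Y ω = 0 ∧ D ω = 0}).toReal = q00 ∧
        (μ {ω | Y ω = 0 ∧ D ω = 1}).toReal = q01 ∧
        (μ {ω | Y ω = 1 ∧ D ω = 0}).toReal = q10 ∧
        (μ {ω | Y ω = 1 ∧ D ω = 1}).toReal = q11 ∧
        (μ {ω | Y0 ω = 0 ∧ Y1 ω = 0}).toReal = p00 ∧
        (μ {ω | Y0 ω = 0 ∧ Y1 ω = 1}).toReal = p01 ∧
        (μ {ω | Y0 ω = 1 ∧ Y1 ω = 0}).toReal = p10 ∧
        (μ {ω | Y0 ω = 1 ∧ Y1 ω = 1}).toReal = p11 ∧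
        (∀ ω, Y ω = Y1 ω * D ω + Y0 ω * (1 - D ω)) := by
  set t : ℝ := max (max 0 (q00 - p01)) (max (p00 - q01) (p00 + p10 - q01 - q10)) with ht
  have lb0 : 0 ≤ t := le_max_of_le_left (le_max_left _ _)
  have lb1 : q00 - p01 ≤ t := le_max_of_le_left (le_max_right _ _)
  have lb2 : p00 - q01 ≤ t := le_max_of_le_right (le_max_left _ _)
  have lb3 : p00 + p10 - q01 - q10 ≤ t := le_max_of_le_right (le_max_right _ _)
  have ub1 : t ≤ p00 := by
    apply max_le (max_le hp00 (by linarith)) (max_le (by linarith) (by linarith))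
  have ub2 : t ≤ q00 := by
    apply max_le (max_le hq00 (by linarith)) (max_le (by linarith) (by linarith))
  have ub3 : t ≤ p00 + p10 - q01 := by
    apply max_le (max_le (by linarith) (by linarith)) (max_le (by linarith) (by linarith))
  have ub4 : t ≤ p00 + p10 + p11 - q01 - q10 := by
    apply max_le (max_le (by linarith) (by linarith)) (max_le (by linarith) (by linarith))
  set v : Fin 8 → ℝ := ![t, p00 - t, q00 - t, p01 - q00 + t,
    p00 + p10 - q01 - t, q01 - p00 + t, q01 + q10 - p00 - p10 + t,
    p11 + p00 + p10 - q01 - q10 - t] with hv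
  have hvnn : ∀ i, 0 ≤ v i := by
    intro i
    fin_cases i <;>
      simp only [hv, vec8_0, vec8_1, vec8_2, vec8_3, vec8_4, vec8_5, vec8_6, vec8_7, vec8m_0, vec8m_1, vec8m_2, vec8m_3, vec8m_4, vec8m_5, vec8m_6, vec8m_7] <;>
      linarith
  refine ⟨Fin 8, ⊤, ∑ i, ENNReal.ofReal (v i) • (@Measure.dirac (Fin 8) ⊤ i), ?_, ?_⟩
  · constructor
    rw [Measure.finset_sum_apply]
    have key : ∀ i : Fin 8, (ENNReal.ofReal (v i) • (@Measure.dirac (Fin 8) ⊤ i)) Set.univ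
        = ENNReal.ofReal (v i) := by
      intro i
      rw [Measure.smul_apply, smul_eq_mul, Measure.dirac_apply' _ MeasurableSet.univ]
      simp
    simp_rw [key]
    rw [← ENNReal.ofReal_sum_of_nonneg (fun i _ => hvnn i), Fin.sum_univ_eight]
    have : v 0 + v 1 + v 2 + v 3 + v 4 + v 5 + v 6 + v 7 = 1 := by
      simp only [hv, vec8_0, vec8_1, vec8_2, vec8_3, vec8_4, vec8_5, vec8_6, vec8_7, vec8m_0, vec8m_1, vec8m_2, vec8m_3, vec8m_4, vec8m_5, vec8m_6, vec8m_7]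
      linarith
    rw [this]; simp
  · refine ⟨fun i => (![0,0,1,1,0,0,1,1] : Fin 8 → ℝ) i * (![0,1,0,1,0,1,0,1] : Fin 8 → ℝ) i
        + (![0,0,0,0,1,1,1,1] : Fin 8 → ℝ) i * (1 - (![0,1,0,1,0,1,0,1] : Fin 8 → ℝ) i),
      ![0,1,0,1,0,1,0,1], ![0,0,0,0,1,1,1,1], ![0,0,1,1,0,0,1,1],
      ?_, ?_, ?_, ?_, ?_, ?_, ?_, ?_, ?_, ?_, ?_, ?_, fun ω => rfl⟩
    · intro i; fin_cases i <;> norm_num [vec8_0, vec8_1, vec8_2, vec8_3, vec8_4, vec8_5, vec8_6, vec8_7, vec8m_0, vec8m_1, vec8m_2, vec8m_3, vec8m_4, vec8m_5, vec8m_6, vec8m_7]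
    · intro i; fin_cases i <;> norm_num [vec8_0, vec8_1, vec8_2, vec8_3, vec8_4, vec8_5, vec8_6, vec8_7, vec8m_0, vec8m_1, vec8m_2, vec8m_3, vec8m_4, vec8m_5, vec8m_6, vec8m_7]
    · intro i; fin_cases i <;> norm_num [vec8_0, vec8_1, vec8_2, vec8_3, vec8_4, vec8_5, vec8_6, vec8_7, vec8m_0, vec8m_1, vec8m_2, vec8m_3, vec8m_4, vec8m_5, vec8m_6, vec8m_7]
    · intro i; fin_cases i <;> norm_num [vec8_0, vec8_1, vec8_2, vec8_3, vec8_4, vec8_5, vec8_6, vec8_7, vec8m_0, vec8m_1, vec8m_2, vec8m_3, vec8m_4, vec8m_5, vec8m_6, vec8m_7]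
    all_goals
      rw [sum_dirac_apply v hvnn, Fin.sum_univ_eight]
      simp only [Set.mem_setOf_eq, hv, vec8_0, vec8_1, vec8_2, vec8_3, vec8_4, vec8_5, vec8_6, vec8_7, vec8m_0, vec8m_1, vec8m_2, vec8m_3, vec8m_4, vec8m_5, vec8m_6, vec8m_7]
      norm_num
    all_goals linarith
end

section
/- Under the generalized binary Roy model with an instrument Z independent of (Y0,Y1) (so the bounds of the generalized model hold conditional on every value z of Z), the proportion that strictly benefits satisfies max(0, 1 − q̲1 − q̲{10-01} − q̲0, q̄00 − q̲0, q̄11 − q̲1) ≤ P(Y1 > Y0) ≤ q̲{00-11}, where q̲1 = inf_z P(Y=1|Z=z), q̲0 = inf_z P(Y=0|Z=z), q̲{10-01} = inf_z [P(Y=1,D=0|Z=z)+P(Y=0,D=1|Z=z)], q̲{00-11} = inf_z [P(Y=0,D=0|Z=z)+P(Y=1,D=1|Z=z)], q̄00 = sup_z P(Y=0,D=0|Z=z), q̄11 = sup_z P(Y=1,D=1|Z=z). -/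
open MeasureTheory

private lemma toReal_mono_sub {Ω : Type*} [MeasurableSpace Ω] (ν : Measure Ω)
    [IsProbabilityMeasure ν] {A B : Set Ω} (h : A ⊆ B) :
    (ν A).toReal ≤ (ν B).toReal :=
  ENNReal.toReal_mono (measure_ne_top ν B) (measure_mono h)

private lemma toReal_subadd {Ω : Type*} [MeasurableSpace Ω] (ν : Measure Ω)
    [IsProbabilityMeasure ν] {A B C : Set Ω} (h : A ⊆ B ∪ C) :
    (ν A).toReal ≤ (ν B).toReal + (ν C).toReal := by
  have h1 : ν A ≤ ν B + ν C := (measure_mono h).trans (measure_union_le _ _)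
  have h2 := ENNReal.toReal_mono
    (by simp [ENNReal.add_ne_top, measure_ne_top]) h1
  rwa [ENNReal.toReal_add (measure_ne_top ν B) (measure_ne_top ν C)] at h2

/-- Bounds on the proportion that strictly benefits from Sector 1 in the generalized
binary Roy model with an instrument.  `μZ z` is the conditional law given `Z = z`,
`S` is the support of `Z`, and `μ` is the (marginal) law; independence of `(Y0, Y1)`
and `Z` is expressed by the conditional joint law of `(Y0, Y1)` not depending on `z`. -/
theorem gen_roy_benefit_bounds
    {Ω : Type*} [MeasurableSpace Ω]
    (μ : Measure Ω) [IsProbabilityMeasure μ]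
    (μZ : ℝ → Measure Ω) (S : Set ℝ) (hS : S.Nonempty)
    (hprob : ∀ z ∈ S, IsProbabilityMeasure (μZ z))
    (Y D Y0 Y1 : Ω → ℝ)
    (hYbin : ∀ ω, Y ω = 0 ∨ Y ω = 1)
    (hDbin : ∀ ω, D ω = 0 ∨ D ω = 1)
    (hY0bin : ∀ ω, Y0 ω = 0 ∨ Y0 ω = 1)
    (hY1bin : ∀ ω, Y1 ω = 0 ∨ Y1 ω = 1)
    (hout : ∀ ω, Y ω = Y1 ω * D ω + Y0 ω * (1 - D ω))
    (hindep : ∀ z ∈ S, ∀ k l : ℝ,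
      μZ z {ω | Y0 ω = k ∧ Y1 ω = l} = μ {ω | Y0 ω = k ∧ Y1 ω = l}) :
    max (max (0 : ℝ)
        (1 - sInf ((fun z => (μZ z {ω | Y ω = 1}).toReal) '' S)
           - sInf ((fun z => (μZ z {ω | Y ω = 1 ∧ D ω = 0}).toReal
                + (μZ z {ω | Y ω = 0 ∧ D ω = 1}).toReal) '' S)
           - sInf ((fun z => (μZ z {ω | Y ω = 0}).toReal) '' S)))
      (max (sSup ((fun z => (μZ z {ω | Y ω = 0 ∧ D ω = 0}).toReal) '' S)
            - sInf ((fun z => (μZ z {ω | Y ω = 0}).toReal) '' S))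
           (sSup ((fun z => (μZ z {ω | Y ω = 1 ∧ D ω = 1}).toReal) '' S)
            - sInf ((fun z => (μZ z {ω | Y ω = 1}).toReal) '' S)))
      ≤ (μ {ω | Y1 ω > Y0 ω}).toReal ∧
    (μ {ω | Y1 ω > Y0 ω}).toReal
      ≤ sInf ((fun z => (μZ z {ω | Y ω = 0 ∧ D ω = 0}).toReal
            + (μZ z {ω | Y ω = 1 ∧ D ω = 1}).toReal) '' S) := by
  -- abbreviations
  set p00 : ℝ := (μ {ω | Y0 ω = 0 ∧ Y1 ω = 0}).toReal with hp00
  set p01 : ℝ := (μ {ω | Y0 ω = 0 ∧ Y1 ω = 1}).toReal with hp01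
  set p10 : ℝ := (μ {ω | Y0 ω = 1 ∧ Y1 ω = 0}).toReal with hp10
  set p11 : ℝ := (μ {ω | Y0 ω = 1 ∧ Y1 ω = 1}).toReal with hp11
  -- the target set equals {Y0 = 0, Y1 = 1}
  have hgt : {ω | Y1 ω > Y0 ω} = {ω | Y0 ω = 0 ∧ Y1 ω = 1} := by
    ext ω
    rcases hY0bin ω with h0 | h0 <;> rcases hY1bin ω with h1 | h1 <;>
      simp [Set.mem_setOf_eq, h0, h1] <;> norm_num
  have htarget : (μ {ω | Y1 ω > Y0 ω}).toReal = p01 := by rw [hgt]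
  -- per-z facts
  have key : ∀ z ∈ S,
      p11 ≤ (μZ z {ω | Y ω = 1}).toReal ∧
      p00 ≤ (μZ z {ω | Y ω = 0}).toReal ∧
      p10 ≤ (μZ z {ω | Y ω = 1 ∧ D ω = 0}).toReal
            + (μZ z {ω | Y ω = 0 ∧ D ω = 1}).toReal ∧
      (μZ z {ω | Y ω = 0 ∧ D ω = 0}).toReal ≤ p00 + p01 ∧
      (μZ z {ω | Y ω = 1 ∧ D ω = 1}).toReal ≤ p01 + p11 ∧
      p01 ≤ (μZ z {ω | Y ω = 0 ∧ D ω = 0}).toReal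
            + (μZ z {ω | Y ω = 1 ∧ D ω = 1}).toReal := by
    intro z hz
    haveI := hprob z hz
    have e00 := hindep z hz 0 0
    have e01 := hindep z hz 0 1
    have e10 := hindep z hz 1 0
    have e11 := hindep z hz 1 1
    refine ⟨?_, ?_, ?_, ?_, ?_, ?_⟩
    · have hsub : {ω | Y0 ω = 1 ∧ Y1 ω = 1} ⊆ {ω | Y ω = 1} := by
        rintro ω ⟨h0, h1⟩
        have := hout ω
        simp only [Set.mem_setOf_eq]
        rw [this, h0, h1]; ring
      calc p11 = (μZ z {ω | Y0 ω = 1 ∧ Y1 ω = 1}).toReal := by rw [e11]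
        _ ≤ _ := toReal_mono_sub _ hsub
    · have hsub : {ω | Y0 ω = 0 ∧ Y1 ω = 0} ⊆ {ω | Y ω = 0} := by
        rintro ω ⟨h0, h1⟩
        have := hout ω
        simp only [Set.mem_setOf_eq]
        rw [this, h0, h1]; ring
      calc p00 = (μZ z {ω | Y0 ω = 0 ∧ Y1 ω = 0}).toReal := by rw [e00]
        _ ≤ _ := toReal_mono_sub _ hsub
    · have hsub : {ω | Y0 ω = 1 ∧ Y1 ω = 0}
          ⊆ {ω | Y ω = 1 ∧ D ω = 0} ∪ {ω | Y ω = 0 ∧ D ω = 1} := by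
        rintro ω ⟨h0, h1⟩
        have hY := hout ω
        rcases hDbin ω with hD | hD
        · left; constructor
          · rw [hY, h0, h1, hD]; ring
          · exact hD
        · right; constructor
          · rw [hY, h0, h1, hD]; ring
          · exact hD
      calc p10 = (μZ z {ω | Y0 ω = 1 ∧ Y1 ω = 0}).toReal := by rw [e10]
        _ ≤ _ := toReal_subadd _ hsub
    · have hsub : {ω | Y ω = 0 ∧ D ω = 0}
          ⊆ {ω | Y0 ω = 0 ∧ Y1 ω = 0} ∪ {ω | Y0 ω = 0 ∧ Y1 ω = 1} := by
        rintro ω ⟨hY, hD⟩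
        have h0 : Y0 ω = 0 := by
          have := hout ω; rw [hD] at this; simp at this; rw [this] at hY; exact hY
        rcases hY1bin ω with h1 | h1
        · exact Or.inl ⟨h0, h1⟩
        · exact Or.inr ⟨h0, h1⟩
      have := toReal_subadd (μZ z) hsub
      rwa [e00, e01] at this
    · have hsub : {ω | Y ω = 1 ∧ D ω = 1}
          ⊆ {ω | Y0 ω = 0 ∧ Y1 ω = 1} ∪ {ω | Y0 ω = 1 ∧ Y1 ω = 1} := by
        rintro ω ⟨hY, hD⟩
        have h1 : Y1 ω = 1 := by
          have := hout ω; rw [hD] at this; simp at this; rw [this] at hY; exact hY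
        rcases hY0bin ω with h0 | h0
        · exact Or.inl ⟨h0, h1⟩
        · exact Or.inr ⟨h0, h1⟩
      have := toReal_subadd (μZ z) hsub
      rwa [e01, e11] at this
    · have hsub : {ω | Y0 ω = 0 ∧ Y1 ω = 1}
          ⊆ {ω | Y ω = 0 ∧ D ω = 0} ∪ {ω | Y ω = 1 ∧ D ω = 1} := by
        rintro ω ⟨h0, h1⟩
        have hY := hout ω
        rcases hDbin ω with hD | hD
        · left; refine ⟨?_, hD⟩
          rw [hY, h0, h1, hD]; ring
        · right; refine ⟨?_, hD⟩
          rw [hY, h0, h1, hD]; ring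
      have := toReal_subadd (μZ z) hsub
      rwa [e01] at this
  -- total mass bound: 1 ≤ p00 + p01 + p10 + p11
  have hsum : (1 : ℝ) ≤ p00 + p01 + p10 + p11 := by
    have hcover : (Set.univ : Set Ω)
        ⊆ ({ω | Y0 ω = 0 ∧ Y1 ω = 0} ∪ {ω | Y0 ω = 0 ∧ Y1 ω = 1})
          ∪ ({ω | Y0 ω = 1 ∧ Y1 ω = 0} ∪ {ω | Y0 ω = 1 ∧ Y1 ω = 1}) := by
      intro ω _
      rcases hY0bin ω with h0 | h0 <;> rcases hY1bin ω with h1 | h1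
      · exact Or.inl (Or.inl ⟨h0, h1⟩)
      · exact Or.inl (Or.inr ⟨h0, h1⟩)
      · exact Or.inr (Or.inl ⟨h0, h1⟩)
      · exact Or.inr (Or.inr ⟨h0, h1⟩)
    have h1 : μ (Set.univ : Set Ω)
        ≤ (μ {ω | Y0 ω = 0 ∧ Y1 ω = 0} + μ {ω | Y0 ω = 0 ∧ Y1 ω = 1})
          + (μ {ω | Y0 ω = 1 ∧ Y1 ω = 0} + μ {ω | Y0 ω = 1 ∧ Y1 ω = 1}) := by
      refine (measure_mono hcover).trans ?_
      refine (measure_union_le _ _).trans ?_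
      gcongr <;> exact measure_union_le _ _
    have h2 := ENNReal.toReal_mono
      (by simp [ENNReal.add_ne_top, measure_ne_top]) h1
    rw [measure_univ] at h2
    simp only [ENNReal.toReal_one] at h2
    rw [ENNReal.toReal_add (by simp [ENNReal.add_ne_top, measure_ne_top])
        (by simp [ENNReal.add_ne_top, measure_ne_top]),
      ENNReal.toReal_add (measure_ne_top _ _) (measure_ne_top _ _),
      ENNReal.toReal_add (measure_ne_top _ _) (measure_ne_top _ _)] at h2
    linarith
  -- image nonemptiness
  have hne : ∀ f : ℝ → ℝ, (f '' S).Nonempty := fun f => hS.image f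
  constructor
  · -- lower bound
    rw [htarget]
    have hI1 : p11 ≤ sInf ((fun z => (μZ z {ω | Y ω = 1}).toReal) '' S) :=
      le_csInf (hne _) (by rintro b ⟨z, hz, rfl⟩; exact (key z hz).1)
    have hI0 : p00 ≤ sInf ((fun z => (μZ z {ω | Y ω = 0}).toReal) '' S) :=
      le_csInf (hne _) (by rintro b ⟨z, hz, rfl⟩; exact (key z hz).2.1)
    have hI10 : p10 ≤ sInf ((fun z => (μZ z {ω | Y ω = 1 ∧ D ω = 0}).toReal
        + (μZ z {ω | Y ω = 0 ∧ D ω = 1}).toReal) '' S) :=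
      le_csInf (hne _) (by rintro b ⟨z, hz, rfl⟩; exact (key z hz).2.2.1)
    have hS00 : sSup ((fun z => (μZ z {ω | Y ω = 0 ∧ D ω = 0}).toReal) '' S)
        ≤ p00 + p01 :=
      csSup_le (hne _) (by rintro b ⟨z, hz, rfl⟩; exact (key z hz).2.2.2.1)
    have hS11 : sSup ((fun z => (μZ z {ω | Y ω = 1 ∧ D ω = 1}).toReal) '' S)
        ≤ p01 + p11 :=
      csSup_le (hne _) (by rintro b ⟨z, hz, rfl⟩; exact (key z hz).2.2.2.2.1)
    refine max_le (max_le ?_ ?_) (max_le ?_ ?_)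
    · exact ENNReal.toReal_nonneg
    · linarith
    · linarith
    · linarith
  · -- upper bound
    rw [htarget]
    exact le_csInf (hne _) (by rintro b ⟨z, hz, rfl⟩; exact (key z hz).2.2.2.2.2)
end

section
/- For any probability measure μ on ℝ × {0,1} (the law of observables (Y,D)) and any Borel probability measure ν on ℝ² (the law of (Y0,Y1)): ν is the law of a pair (Y0,Y1) on a probability space carrying (Y,D) with law μ such that Y = Y1·D + Y0·(1−D), Y1 > Y0 ⇒ D=1, Y0 > Y1 ⇒ D=0, if and only if for every Borel set A ⊆ ℝ², μ({(y,0): y ∈ L_{A,0}}) + μ({(y,1): y ∈ L_{A,1}}) ≤ ν(A) ≤ μ({(y,0): y ∈ U_{A,0}}) + μ({(y,1): y ∈ U_{A,1}}), where U_{A,1} = {y : ((−∞,y] × {y}) ∩ A ≠ ∅}, U_{A,0} = {y : ({y} × (−∞,y]) ∩ A ≠ ∅}, L_{A,1} = {y : (−∞,y] × {y} ⊆ A}, L_{A,0} = {y : {y} × (−∞,y] ⊆ A}. -/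
/-!
A coupling splits the law `ν` of `(Y0, Y1)` as `ν₀ + ν₁ ∘ swap`, where `ν_d` is the law of
`(Y_d, Y_{1-d})` on `{D = d}`: it is carried by the closed half-plane `{p.2 ≤ p.1}` and its first
marginal is the observed slice `μ(· × {d})`. Conversely, any such splitting is realized on the
graph of the Roy correspondence.

A splitting gives the inequalities one sector at a time. The upper one holds because `A` lies in
`fst⁻¹' U_A` up to a null set. The lower one needs inner regularity, since `L_A` need not be
Borel. For the converse only the upper inequalities are used. Applied inside the open
half-planes, they bound the off-diagonal parts of `ν` by the slices. Applied to
`{max p.1 p.2 ∈ B}`, they show that `max Y0 Y1` has the law of `Y`, so the diagonal mass of `ν`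
is exactly what the slices still lack, and splitting it accordingly gives `ν₀` and `ν₁`.
-/

open MeasureTheory Set

namespace MeasureTheory.Measure

variable {X Z : Type*} [MeasurableSpace X] [TopologicalSpace X] [OpensMeasurableSpace X]
  [T2Space X] [MeasurableSpace Z] [TopologicalSpace Z] [BorelSpace Z] [T2Space Z]

/-- `E` need not be measurable: it is kept away from the closed images of compact subsets
of `Wᶜ`, which exhaust `Wᶜ` by inner regularity. -/
theorem map_apply_le_of_preimage_subset (ν : Measure X) [IsFiniteMeasure ν]
    [ν.InnerRegularCompactLTTop] {g : X → Z} (hg : Continuous g) {W : Set X}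
    (hW : MeasurableSet W) {E : Set Z} (hE : g ⁻¹' E ⊆ W) : ν.map g E ≤ ν W := by
  refine ENNReal.le_of_forall_pos_le_add fun ε hε _ => ?_
  obtain ⟨K, hKW, hK, hνK⟩ := hW.compl.exists_isCompact_lt_add (measure_ne_top ν Wᶜ)
    (ENNReal.coe_ne_zero.mpr hε.ne')
  have hgK : MeasurableSet (g '' K) := (hK.image hg).isClosed.measurableSet
  have hEK : E ⊆ (g '' K)ᶜ := by
    rintro z hz ⟨x, hxK, rfl⟩
    exact hKW hxK (hE hz)
  calc ν.map g E ≤ ν.map g (g '' K)ᶜ := measure_mono hEK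
    _ = ν (g ⁻¹' (g '' K)ᶜ) := map_apply hg.measurable hgK.compl
    _ ≤ ν Kᶜ := measure_mono (compl_subset_compl.mpr (subset_preimage_image g K))
    _ ≤ ν W + ε := by
      rw [measure_compl hK.measurableSet (measure_ne_top ν K), tsub_le_iff_right,
        ← measure_add_measure_compl hW, add_assoc, add_comm (ε : ENNReal)]
      exact add_le_add le_rfl hνK.le

end MeasureTheory.Measure

namespace RoyModel

section Slice

variable {α β : Type*} [MeasurableSpace α] [MeasurableSpace β] [MeasurableSingletonClass β]

noncomputable def slice (μ : Measure (α × β)) (b : β) : Measure α :=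
  μ.comap fun a => (a, b)

theorem slice_apply (μ : Measure (α × β)) (b : β) (s : Set α) :
    slice μ b s = μ (s ×ˢ {b}) := by
  rw [slice, (measurableEmbedding_prod_mk_right b).comap_apply]
  congr 1
  ext ⟨a, c⟩
  simp [eq_comm]

instance (μ : Measure (α × β)) [IsFiniteMeasure μ] (b : β) : IsFiniteMeasure (slice μ b) := by
  unfold slice; infer_instance

theorem slice_map_prodMk {Ω : Type*} [MeasurableSpace Ω] (P : Measure Ω) {Y : Ω → α}
    {D : Ω → β} (hY : Measurable Y) (hD : Measurable D) (b : β) :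
    slice (P.map fun ω => (Y ω, D ω)) b = (P.restrict (D ⁻¹' {b})).map Y := by
  ext s hs
  rw [slice_apply, Measure.map_apply (hY.prodMk hD) (hs.prod (measurableSet_singleton b)),
    Measure.map_apply hY hs, Measure.restrict_apply (hY hs), mk_preimage_prod]

theorem map_slice_false_add_map_slice_true (μ : Measure (α × Bool)) :
    (slice μ false).map (·, false) + (slice μ true).map (·, true) = μ := by
  rw [slice, slice, (measurableEmbedding_prod_mk_right false).map_comap,
    (measurableEmbedding_prod_mk_right true).map_comap]
  have hcompl : range (·, true) = (range (·, false) : Set (α × Bool))ᶜ := by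
    ext ⟨a, c⟩
    cases c <;> simp
  rw [hcompl, Measure.restrict_add_restrict_compl
    (measurableEmbedding_prod_mk_right false).measurableSet_range]

theorem slice_false_add_slice_true_apply_univ (μ : Measure (α × Bool)) :
    (slice μ false + slice μ true) univ = μ univ := by
  conv_rhs => rw [← map_slice_false_add_map_slice_true μ]
  rw [Measure.add_apply, Measure.add_apply,
    Measure.map_apply measurable_prodMk_right MeasurableSet.univ,
    Measure.map_apply measurable_prodMk_right MeasurableSet.univ, preimage_univ, preimage_univ]

end Slice

theorem measurableSet_lt_fst_snd : MeasurableSet {p : ℝ × ℝ | p.1 < p.2} :=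
  measurableSet_lt measurable_fst measurable_snd

theorem measurableSet_lt_snd_fst : MeasurableSet {p : ℝ × ℝ | p.2 < p.1} :=
  measurableSet_lt measurable_snd measurable_fst

/-- `upper A` and `lower A` are the paper's `U_{A,0}` and `L_{A,0}`; its `U_{A,1}` and `L_{A,1}`
are `upper (Prod.swap ⁻¹' A)` and `lower (Prod.swap ⁻¹' A)`. -/
def upper (A : Set (ℝ × ℝ)) : Set ℝ := {y | ∃ x ≤ y, (y, x) ∈ A}

def lower (A : Set (ℝ × ℝ)) : Set ℝ := {y | ∀ x ≤ y, (y, x) ∈ A}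

/-- Models the law of `(Y_d, Y_{1-d})` on `{D = d}`; sector `1` is read through `Prod.swap`, so
the selected outcome always comes first. -/
structure IsSectorLaw (ν₀ : Measure (ℝ × ℝ)) (m : Measure ℝ) : Prop where
  measure_lt : ν₀ {p | p.1 < p.2} = 0
  map_fst : ν₀.map Prod.fst = m

namespace IsSectorLaw

variable {ν₀ : Measure (ℝ × ℝ)} {m : Measure ℝ}

theorem isFiniteMeasure (h : IsSectorLaw ν₀ m) [IsFiniteMeasure m] : IsFiniteMeasure ν₀ := by
  have : IsFiniteMeasure (ν₀.map Prod.fst) := h.map_fst ▸ ‹_›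
  exact Measure.isFiniteMeasure_of_map measurable_fst.aemeasurable

theorem apply_le (h : IsSectorLaw ν₀ m) (A : Set (ℝ × ℝ)) : ν₀ A ≤ m (upper A) := by
  have hA : A ⊆ Prod.fst ⁻¹' upper A ∪ {p | p.1 < p.2} := fun p hp =>
    (le_or_gt p.2 p.1).imp (fun hle => ⟨p.2, hle, hp⟩) id
  calc ν₀ A ≤ ν₀ (Prod.fst ⁻¹' upper A) + ν₀ {p | p.1 < p.2} :=
        (measure_mono hA).trans (measure_union_le _ _)
    _ ≤ m (upper A) := by
      rw [h.measure_lt, add_zero, ← h.map_fst]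
      exact Measure.le_map_apply measurable_fst.aemeasurable _

theorem le_apply (h : IsSectorLaw ν₀ m) [IsFiniteMeasure m] {A : Set (ℝ × ℝ)}
    (hA : MeasurableSet A) : m (lower A) ≤ ν₀ A := by
  have := h.isFiniteMeasure
  have hW : MeasurableSet (A ∪ {p : ℝ × ℝ | p.1 < p.2}) := hA.union measurableSet_lt_fst_snd
  calc m (lower A) ≤ ν₀ (A ∪ {p | p.1 < p.2}) := by
        rw [← h.map_fst]
        refine Measure.map_apply_le_of_preimage_subset ν₀ continuous_fst hW fun p hp => ?_
        exact (le_or_gt p.2 p.1).imp (hp p.2) id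
    _ ≤ ν₀ A + ν₀ {p | p.1 < p.2} := measure_union_le _ _
    _ = ν₀ A := by rw [h.measure_lt, add_zero]

end IsSectorLaw

theorem artstein_bounds_of_isSectorLaw {ν ν₀ ν₁ : Measure (ℝ × ℝ)} {m₀ m₁ : Measure ℝ}
    [IsFiniteMeasure m₀] [IsFiniteMeasure m₁] (h₀ : IsSectorLaw ν₀ m₀) (h₁ : IsSectorLaw ν₁ m₁)
    (hν : ν = ν₀ + ν₁.map Prod.swap) {A : Set (ℝ × ℝ)} (hA : MeasurableSet A) :
    m₀ (lower A) + m₁ (lower (Prod.swap ⁻¹' A)) ≤ ν A ∧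
      ν A ≤ m₀ (upper A) + m₁ (upper (Prod.swap ⁻¹' A)) := by
  rw [hν, Measure.add_apply, Measure.map_apply measurable_swap hA]
  exact ⟨add_le_add (h₀.le_apply hA) (h₁.le_apply (measurable_swap hA)),
    add_le_add (h₀.apply_le A) (h₁.apply_le _)⟩

theorem isSectorLaw_map_restrict {Ω : Type*} [MeasurableSpace Ω] (P : Measure Ω) {s : Set Ω}
    {X Z : Ω → ℝ} (hX : Measurable X) (hZ : Measurable Z) (hle : ∀ ω ∈ s, Z ω ≤ X ω) :
    IsSectorLaw ((P.restrict s).map fun ω => (X ω, Z ω)) ((P.restrict s).map X) where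
  measure_lt := by
    rw [Measure.map_apply (hX.prodMk hZ) measurableSet_lt_fst_snd,
      Measure.restrict_apply (hX.prodMk hZ measurableSet_lt_fst_snd)]
    exact measure_mono_null (fun ω ⟨hω, hωs⟩ => (hle ω hωs).not_gt hω) measure_empty
  map_fst := by
    rw [Measure.map_map measurable_fst (hX.prodMk hZ)]
    rfl

theorem exists_isSectorLaw_of_coupling {Ω : Type*} [MeasurableSpace Ω] (P : Measure Ω)
    {Y : Ω → ℝ} {D : Ω → Bool} {Y0 Y1 : Ω → ℝ} (hY : Measurable Y) (hD : Measurable D)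
    (hY0 : Measurable Y0) (hY1 : Measurable Y1) (hsel : ∀ ω, Y ω = if D ω then Y1 ω else Y0 ω)
    (h10 : ∀ ω, Y1 ω > Y0 ω → D ω = true) (h01 : ∀ ω, Y0 ω > Y1 ω → D ω = false) :
    ∃ ν₀ ν₁, IsSectorLaw ν₀ (slice (P.map fun ω => (Y ω, D ω)) false) ∧
      IsSectorLaw ν₁ (slice (P.map fun ω => (Y ω, D ω)) true) ∧
      P.map (fun ω => (Y0 ω, Y1 ω)) = ν₀ + ν₁.map Prod.swap := by
  have hF : MeasurableSet (D ⁻¹' {false}) := hD (measurableSet_singleton false)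
  have hT : MeasurableSet (D ⁻¹' {true}) := hD (measurableSet_singleton true)
  have hTF : D ⁻¹' {true} = (D ⁻¹' {false})ᶜ := by ext ω; simp
  refine ⟨(P.restrict (D ⁻¹' {false})).map fun ω => (Y0 ω, Y1 ω),
    (P.restrict (D ⁻¹' {true})).map fun ω => (Y1 ω, Y0 ω), ?_, ?_, ?_⟩
  · rw [slice_map_prodMk P hY hD, Measure.map_congr (ae_restrict_of_forall_mem hF
      fun ω (hω : D ω = false) => show Y ω = Y0 ω by simp [hsel ω, hω])]
    refine isSectorLaw_map_restrict P hY0 hY1 fun ω (hω : D ω = false) => ?_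
    exact not_lt.mp fun hlt => by simp [h10 ω hlt] at hω
  · rw [slice_map_prodMk P hY hD, Measure.map_congr (ae_restrict_of_forall_mem hT
      fun ω (hω : D ω = true) => show Y ω = Y1 ω by simp [hsel ω, hω])]
    refine isSectorLaw_map_restrict P hY1 hY0 fun ω (hω : D ω = true) => ?_
    exact not_lt.mp fun hlt => by simp [h01 ω hlt] at hω
  · rw [Measure.map_map measurable_swap (hY1.prodMk hY0)]
    change _ = _ + (P.restrict (D ⁻¹' {true})).map fun ω => (Y0 ω, Y1 ω)
    rw [← Measure.map_add _ _ (hY0.prodMk hY1), hTF, Measure.restrict_add_restrict_compl hF]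

def ArtsteinUpperBound (ν : Measure (ℝ × ℝ)) (m₀ m₁ : Measure ℝ) : Prop :=
  ∀ A, MeasurableSet A → ν A ≤ m₀ (upper A) + m₁ (upper (Prod.swap ⁻¹' A))

namespace ArtsteinUpperBound

variable {ν : Measure (ℝ × ℝ)} {m₀ m₁ : Measure ℝ}

theorem map_swap (h : ArtsteinUpperBound ν m₀ m₁) :
    ArtsteinUpperBound (ν.map Prod.swap) m₁ m₀ := by
  intro A hA
  rw [Measure.map_apply measurable_swap hA, add_comm]
  simpa only [← preimage_comp, Prod.swap_swap_eq, preimage_id] using h _ (measurable_swap hA)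

theorem map_fst_restrict_le (h : ArtsteinUpperBound ν m₀ m₁) :
    (ν.restrict {p | p.2 < p.1}).map Prod.fst ≤ m₀ := by
  refine Measure.le_iff.mpr fun B hB => ?_
  have hA : MeasurableSet (Prod.fst ⁻¹' B ∩ {p : ℝ × ℝ | p.2 < p.1}) :=
    (measurable_fst hB).inter measurableSet_lt_snd_fst
  have hU₀ : upper (Prod.fst ⁻¹' B ∩ {p | p.2 < p.1}) = B := by
    ext y
    exact ⟨fun ⟨_, _, hy, _⟩ => hy, fun hy => ⟨y - 1, by linarith, hy, show y - 1 < y by linarith⟩⟩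
  have hU₁ : upper (Prod.swap ⁻¹' (Prod.fst ⁻¹' B ∩ {p | p.2 < p.1})) = ∅ :=
    eq_empty_of_forall_notMem fun y ⟨x, hxy, _, hyx⟩ => (not_lt.mpr hxy) hyx
  have := h _ hA
  rwa [hU₀, hU₁, measure_empty, add_zero, ← Measure.restrict_apply (measurable_fst hB),
    ← Measure.map_apply measurable_fst hB] at this

theorem map_max_le (h : ArtsteinUpperBound ν m₀ m₁) :
    ν.map (fun p => max p.1 p.2) ≤ m₀ + m₁ := by
  have hmax : Measurable fun p : ℝ × ℝ => max p.1 p.2 := measurable_fst.max measurable_snd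
  refine Measure.le_iff.mpr fun B hB => ?_
  have hU : ∀ y, (∃ x ≤ y, max y x ∈ B) ↔ y ∈ B := fun y =>
    ⟨fun ⟨x, hxy, hB⟩ => by rwa [max_eq_left hxy] at hB, fun hy => ⟨y, le_rfl, by rwa [max_self]⟩⟩
  have hU₀ : upper ((fun p : ℝ × ℝ => max p.1 p.2) ⁻¹' B) = B := by
    ext y; exact hU y
  have hU₁ : upper (Prod.swap ⁻¹' ((fun p : ℝ × ℝ => max p.1 p.2) ⁻¹' B)) = B := by
    ext y
    show (∃ x ≤ y, max x y ∈ B) ↔ y ∈ B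
    simpa only [max_comm] using hU y
  have := h _ (hmax hB)
  rwa [hU₀, hU₁, ← Measure.map_apply hmax hB, ← Measure.add_apply] at this

end ArtsteinUpperBound

theorem eq_restrict_add_map_swap_add_map_diag (ν : Measure (ℝ × ℝ)) :
    ν = ν.restrict {p | p.2 < p.1} + ((ν.map Prod.swap).restrict {p | p.2 < p.1}).map Prod.swap
      + ((ν.restrict {p | p.1 = p.2}).map Prod.fst).map Function.diag := by
  have hswap : ((ν.map Prod.swap).restrict {p | p.2 < p.1}).map Prod.swap
      = ν.restrict {p | p.1 < p.2} := by
    rw [Measure.restrict_map measurable_swap measurableSet_lt_snd_fst,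
      Measure.map_map measurable_swap measurable_swap, Prod.swap_swap_eq, Measure.map_id]
    rfl
  have hdiag : ((ν.restrict {p | p.1 = p.2}).map Prod.fst).map Function.diag
      = ν.restrict {p | p.1 = p.2} := by
    rw [Measure.map_map measurable_diag measurable_fst]
    conv_rhs => rw [← Measure.map_id (μ := ν.restrict _)]
    refine Measure.map_congr ((ae_restrict_iff' (measurableSet_eq_fun measurable_fst
      measurable_snd)).mpr (ae_of_all _ fun p (hp : p.1 = p.2) => ?_))
    exact Prod.ext rfl hp
  have hcompl : ({p | p.2 < p.1} ∪ {p | p.1 < p.2} : Set (ℝ × ℝ))ᶜ = {p | p.1 = p.2} := by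
    ext p
    simp [le_antisymm_iff]
  rw [hswap, hdiag, ← Measure.restrict_union ?_ measurableSet_lt_fst_snd,
    ← hcompl, Measure.restrict_add_restrict_compl]
  · exact measurableSet_lt_snd_fst.union measurableSet_lt_fst_snd
  · exact disjoint_left.mpr fun p (h₁ : p.2 < p.1) (h₂ : p.1 < p.2) => h₁.not_gt h₂

theorem map_max_restrict_lt (ν : Measure (ℝ × ℝ)) :
    (ν.restrict {p | p.2 < p.1}).map (fun p => max p.1 p.2)
      = (ν.restrict {p | p.2 < p.1}).map Prod.fst :=
  Measure.map_congr ((ae_restrict_iff' measurableSet_lt_snd_fst).mpr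
    (ae_of_all _ fun _ hp => max_eq_left (le_of_lt hp)))

theorem map_max_eq (ν : Measure (ℝ × ℝ)) :
    ν.map (fun p => max p.1 p.2) = (ν.restrict {p | p.2 < p.1}).map Prod.fst
      + ((ν.map Prod.swap).restrict {p | p.2 < p.1}).map Prod.fst
      + (ν.restrict {p | p.1 = p.2}).map Prod.fst := by
  have hmax : Measurable fun p : ℝ × ℝ => max p.1 p.2 := measurable_fst.max measurable_snd
  have hmax_swap : (fun p : ℝ × ℝ => max p.1 p.2) ∘ Prod.swap = fun p => max p.1 p.2 := by
    ext p; exact max_comm _ _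
  have hmax_diag : (fun p : ℝ × ℝ => max p.1 p.2) ∘ Function.diag = id := by
    ext x; exact max_self x
  conv_lhs => rw [eq_restrict_add_map_swap_add_map_diag ν]
  rw [Measure.map_add _ _ hmax, Measure.map_add _ _ hmax, Measure.map_map hmax measurable_swap,
    Measure.map_map hmax measurable_diag, hmax_swap, hmax_diag, Measure.map_id,
    map_max_restrict_lt, map_max_restrict_lt]

theorem isSectorLaw_of_map_fst_restrict_le {ν : Measure (ℝ × ℝ)} [IsFiniteMeasure ν]
    {m : Measure ℝ} (h : (ν.restrict {p | p.2 < p.1}).map Prod.fst ≤ m) :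
    IsSectorLaw (ν.restrict {p | p.2 < p.1}
      + (m - (ν.restrict {p | p.2 < p.1}).map Prod.fst).map Function.diag) m where
  measure_lt := by
    have hlt : MeasurableSet {p : ℝ × ℝ | p.1 < p.2} :=
      measurableSet_lt_fst_snd
    rw [Measure.add_apply, Measure.restrict_apply hlt, Measure.map_apply measurable_diag hlt]
    have h₁ : {p : ℝ × ℝ | p.1 < p.2} ∩ {p | p.2 < p.1} = ∅ :=
      eq_empty_of_forall_notMem fun p ⟨(h₁ : p.1 < p.2), (h₂ : p.2 < p.1)⟩ => h₁.not_gt h₂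
    have h₂ : (Function.diag : ℝ → ℝ × ℝ) ⁻¹' {p | p.1 < p.2} = ∅ :=
      eq_empty_of_forall_notMem fun x (hx : x < x) => hx.false
    rw [h₁, h₂, measure_empty, measure_empty, add_zero]
  map_fst := by
    rw [Measure.map_add _ _ measurable_fst, Measure.map_map measurable_fst measurable_diag,
      Function.fst_comp_diag, Measure.map_id, add_comm, Measure.sub_add_cancel_of_le h]

theorem ArtsteinUpperBound.exists_isSectorLaw {ν : Measure (ℝ × ℝ)} {m₀ m₁ : Measure ℝ}
    [IsFiniteMeasure ν] (h : ArtsteinUpperBound ν m₀ m₁) (hmass : ν univ = (m₀ + m₁) univ) :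
    ∃ ν₀ ν₁, IsSectorLaw ν₀ m₀ ∧ IsSectorLaw ν₁ m₁ ∧ ν = ν₀ + ν₁.map Prod.swap := by
  have hdecomp := eq_restrict_add_map_swap_add_map_diag ν
  have hmax_le := h.map_max_le
  rw [map_max_eq] at hmax_le
  have hn₀ := h.map_fst_restrict_le
  have hn₁ := h.map_swap.map_fst_restrict_le
  set n₀ := (ν.restrict {p | p.2 < p.1}).map Prod.fst
  set n₁ := ((ν.map Prod.swap).restrict {p | p.2 < p.1}).map Prod.fst
  set d := (ν.restrict {p | p.1 = p.2}).map Prod.fst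
  have hmax : n₀ + n₁ + d = m₀ + m₁ := by
    refine Measure.eq_of_le_of_measure_univ_eq hmax_le ?_
    rwa [← map_max_eq, Measure.map_apply (measurable_fst.max measurable_snd) MeasurableSet.univ,
      preimage_univ]
  have hd : (m₀ - n₀) + (m₁ - n₁) = d := by
    have hcancel : (n₀ + n₁) + ((m₀ - n₀) + (m₁ - n₁)) = (n₀ + n₁) + d := by
      rw [add_add_add_comm, add_comm n₀, add_comm n₁, Measure.sub_add_cancel_of_le hn₀,
        Measure.sub_add_cancel_of_le hn₁, hmax]
    exact le_antisymm (Measure.le_of_add_le_add_left hcancel.le)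
      (Measure.le_of_add_le_add_left hcancel.ge)
  refine ⟨_, _, isSectorLaw_of_map_fst_restrict_le hn₀, isSectorLaw_of_map_fst_restrict_le hn₁, ?_⟩
  have hswap_diag : Prod.swap ∘ (Function.diag : ℝ → ℝ × ℝ) = Function.diag := rfl
  rw [Measure.map_add _ _ measurable_swap, Measure.map_map measurable_swap measurable_diag,
    hswap_diag]
  conv_lhs => rw [hdecomp, ← hd, Measure.map_add _ _ measurable_diag]
  abel

/-- The graph of the Roy correspondence `G`: on it the selection constraints hold pointwise,
not merely almost surely. -/
def royGraph : Set ((ℝ × ℝ) × Bool) :=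
  {p | p.2 ≤ p.1} ×ˢ {false} ∪ {p | p.1 ≤ p.2} ×ˢ {true}

def royOutcome (q : (ℝ × ℝ) × Bool) : ℝ × Bool :=
  (if q.2 then q.1.2 else q.1.1, q.2)

theorem measurable_swap_true : Measurable fun p : ℝ × ℝ => (p.swap, true) :=
  measurable_swap.prodMk measurable_const

noncomputable def sectorJoint (ν₀ ν₁ : Measure (ℝ × ℝ)) : Measure ((ℝ × ℝ) × Bool) :=
  ν₀.map (·, false) + ν₁.map fun p => (p.swap, true)

theorem measurableSet_royGraph : MeasurableSet royGraph :=
  ((measurableSet_le measurable_snd measurable_fst).prod (measurableSet_singleton false)).union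
    ((measurableSet_le measurable_fst measurable_snd).prod (measurableSet_singleton true))

theorem measurable_royOutcome : Measurable royOutcome :=
  (Measurable.ite (measurable_snd (measurableSet_singleton true))
    (measurable_snd.comp measurable_fst) (measurable_fst.comp measurable_fst)).prodMk measurable_snd

section sectorJoint

variable {ν₀ ν₁ : Measure (ℝ × ℝ)}

theorem sectorJoint_compl_royGraph (h₀ : ν₀ {p | p.1 < p.2} = 0) (h₁ : ν₁ {p | p.1 < p.2} = 0) :
    sectorJoint ν₀ ν₁ royGraphᶜ = 0 := by
  rw [sectorJoint, Measure.add_apply,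
    Measure.map_apply measurable_prodMk_right measurableSet_royGraph.compl,
    Measure.map_apply measurable_swap_true measurableSet_royGraph.compl]
  have e₀ : (fun p : ℝ × ℝ => (p, false)) ⁻¹' royGraphᶜ = {p | p.1 < p.2} := by
    ext p; simp [royGraph]
  have e₁ : (fun p : ℝ × ℝ => (p.swap, true)) ⁻¹' royGraphᶜ = {p | p.1 < p.2} := by
    ext p; simp [royGraph]
  rw [e₀, e₁, h₀, h₁, add_zero]

theorem map_fst_sectorJoint : (sectorJoint ν₀ ν₁).map Prod.fst = ν₀ + ν₁.map Prod.swap := by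
  rw [sectorJoint, Measure.map_add _ _ measurable_fst,
    Measure.map_map measurable_fst measurable_prodMk_right,
    Measure.map_map measurable_fst measurable_swap_true]
  exact congrArg₂ (· + ·) Measure.map_id rfl

theorem map_royOutcome_sectorJoint : (sectorJoint ν₀ ν₁).map royOutcome =
    (ν₀.map Prod.fst).map (·, false) + (ν₁.map Prod.fst).map (·, true) := by
  rw [sectorJoint, Measure.map_add _ _ measurable_royOutcome,
    Measure.map_map measurable_royOutcome measurable_prodMk_right,
    Measure.map_map measurable_royOutcome measurable_swap_true,
    Measure.map_map measurable_prodMk_right measurable_fst,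
    Measure.map_map measurable_prodMk_right measurable_fst]
  rfl

end sectorJoint

theorem exists_coupling_of_isSectorLaw {μ : Measure (ℝ × Bool)} {ν ν₀ ν₁ : Measure (ℝ × ℝ)}
    [IsProbabilityMeasure ν] (h₀ : IsSectorLaw ν₀ (slice μ false))
    (h₁ : IsSectorLaw ν₁ (slice μ true)) (hν : ν = ν₀ + ν₁.map Prod.swap) :
    ∃ (Ω : Type) (_ : MeasurableSpace Ω) (P : Measure Ω),
      IsProbabilityMeasure P ∧
      ∃ (Y : Ω → ℝ) (D : Ω → Bool) (Y0 Y1 : Ω → ℝ),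
        Measurable Y ∧ Measurable D ∧ Measurable Y0 ∧ Measurable Y1 ∧
        P.map (fun ω => (Y ω, D ω)) = μ ∧
        P.map (fun ω => (Y0 ω, Y1 ω)) = ν ∧
        (∀ ω, Y ω = if D ω then Y1 ω else Y0 ω) ∧
        (∀ ω, Y1 ω > Y0 ω → D ω = true) ∧
        (∀ ω, Y0 ω > Y1 ω → D ω = false) := by
  set π := sectorJoint ν₀ ν₁
  have hπ_graph : ∀ᵐ q ∂π, q ∈ royGraph :=
    ae_iff.mpr (sectorJoint_compl_royGraph h₀.measure_lt h₁.measure_lt)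
  have hπ_fst : π.map Prod.fst = ν := map_fst_sectorJoint.trans hν.symm
  have : IsProbabilityMeasure (π.map Prod.fst) := hπ_fst ▸ inferInstance
  have : IsProbabilityMeasure π := Measure.isProbabilityMeasure_of_map Prod.fst
  set P := π.comap (Subtype.val : royGraph → (ℝ × ℝ) × Bool)
  have hP : IsProbabilityMeasure P :=
    (MeasurableEmbedding.subtype_coe measurableSet_royGraph).isProbabilityMeasure_comap
      (by rwa [Subtype.range_coe])
  have hP_val : P.map Subtype.val = π := by
    rw [map_comap_subtype_coe measurableSet_royGraph, Measure.restrict_eq_self_of_ae_mem hπ_graph]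
  refine ⟨royGraph, inferInstance, P, hP, fun ω => (royOutcome ω).1, fun ω => ω.1.2,
    fun ω => ω.1.1.1, fun ω => ω.1.1.2, (measurable_fst.comp measurable_royOutcome).comp
    measurable_subtype_coe, measurable_snd.comp measurable_subtype_coe, ?_, ?_, ?_, ?_,
    fun ω => rfl, ?_, ?_⟩
  · exact (measurable_fst.comp measurable_fst).comp measurable_subtype_coe
  · exact (measurable_snd.comp measurable_fst).comp measurable_subtype_coe
  · change P.map (royOutcome ∘ Subtype.val) = μ
    rw [← Measure.map_map measurable_royOutcome measurable_subtype_coe, hP_val,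
      map_royOutcome_sectorJoint, h₀.map_fst, h₁.map_fst, map_slice_false_add_map_slice_true]
  · change P.map (Prod.fst ∘ Subtype.val) = ν
    rw [← Measure.map_map measurable_fst measurable_subtype_coe, hP_val, hπ_fst]
  · rintro ⟨q, ⟨hle, hD⟩ | ⟨-, hD⟩⟩ hlt
    · exact absurd hle (not_le.mpr hlt)
    · exact hD
  · rintro ⟨q, ⟨-, hD⟩ | ⟨hle, hD⟩⟩ hlt
    · exact hD
    · exact absurd hle (not_le.mpr hlt)

end RoyModel

open RoyModel

/-- Artstein-type characterization of the empirical content of the continuous Roy model: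
`ν` (a candidate law of `(Y0, Y1)`) is compatible with the observable law `μ` of `(Y, D)`
(with `D = true` coding Sector 1) if and only if the lower/upper-set inequalities hold
for every Borel set `A ⊆ ℝ²`. -/
theorem roy_artstein_characterization
    (μ : Measure (ℝ × Bool)) [IsProbabilityMeasure μ]
    (ν : Measure (ℝ × ℝ)) [IsProbabilityMeasure ν] :
    (∃ (Ω : Type) (_ : MeasurableSpace Ω) (P : Measure Ω),
      IsProbabilityMeasure P ∧
      ∃ (Y : Ω → ℝ) (D : Ω → Bool) (Y0 Y1 : Ω → ℝ),
        Measurable Y ∧ Measurable D ∧ Measurable Y0 ∧ Measurable Y1 ∧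
        P.map (fun ω => (Y ω, D ω)) = μ ∧
        P.map (fun ω => (Y0 ω, Y1 ω)) = ν ∧
        (∀ ω, Y ω = if D ω then Y1 ω else Y0 ω) ∧
        (∀ ω, Y1 ω > Y0 ω → D ω = true) ∧
        (∀ ω, Y0 ω > Y1 ω → D ω = false)) ↔
    (∀ A : Set (ℝ × ℝ), MeasurableSet A →
      μ ({y : ℝ | ∀ x ≤ y, (y, x) ∈ A} ×ˢ ({false} : Set Bool)) +
        μ ({y : ℝ | ∀ x ≤ y, (x, y) ∈ A} ×ˢ ({true} : Set Bool)) ≤ ν A ∧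
      ν A ≤ μ ({y : ℝ | ∃ x ≤ y, (y, x) ∈ A} ×ˢ ({false} : Set Bool)) +
        μ ({y : ℝ | ∃ x ≤ y, (x, y) ∈ A} ×ˢ ({true} : Set Bool))) := by
  constructor
  · rintro ⟨Ω, _, P, -, Y, D, Y0, Y1, hY, hD, hY0, hY1, rfl, rfl, hsel, h10, h01⟩ A hA
    obtain ⟨ν₀, ν₁, h₀, h₁, hν⟩ :=
      exists_isSectorLaw_of_coupling P hY hD hY0 hY1 hsel h10 h01
    have hbounds := artstein_bounds_of_isSectorLaw h₀ h₁ hν hA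
    simp only [slice_apply] at hbounds
    exact hbounds
  · intro h
    have hupper : ArtsteinUpperBound ν (slice μ false) (slice μ true) := fun A hA => by
      rw [slice_apply, slice_apply]
      exact (h A hA).2
    have hmass : ν univ = (slice μ false + slice μ true) univ := by
      rw [slice_false_add_slice_true_apply_univ, measure_univ, measure_univ]
    obtain ⟨ν₀, ν₁, h₀, h₁, hν⟩ := hupper.exists_isSectorLaw hmass
    exact exists_coupling_of_isSectorLaw h₀ h₁ hν
end

section
/- Let Y be a real random variable and D a {0,1}-valued random variable on the same space, and let F1, F0 : ℝ → [0,1] be right-continuous functions such that for d = 0,1 and all extended reals y1 < y2, Fd(y2) − Fd(y1) ≥ P(y1 < Y ≤ y2, D=d) + P(Y ≤ y2, D=1−d)·1{y1 = −∞} (with Fd(−∞) interpreted as the limit). Then there exists a probability space carrying (Y, D) with the same joint law and real random variables (Y0, Y1) with cumulative distribution functions F0 and F1 respectively, such that Y = Y1·D + Y0·(1−D), Y1 > Y0 ⇒ D = 1, and Y0 > Y1 ⇒ D = 0. -/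
open MeasureTheory Filter

/-! ### Auxiliary definitions and lemmas for the Roy model sharpness construction -/

/-- Generalized inverse (quantile-type) of a function `G : ℝ → ℝ`. -/
noncomputable def roy_inv (G : ℝ → ℝ) (u : ℝ) : ℝ := sInf {z | u ≤ G z}

private lemma roy_bddBelow {G : ℝ → ℝ} (hmono : Monotone G) {u : ℝ}
    (hsmall : ∃ z, G z < u) : BddBelow {z | u ≤ G z} := by
  obtain ⟨z₀, hz₀⟩ := hsmall
  refine ⟨z₀, fun w hw => ?_⟩
  by_contra hlt
  push_neg at hlt
  have hw' : u ≤ G w := hw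
  exact absurd (hw'.trans (hmono hlt.le)) (not_le.mpr hz₀)

private lemma roy_inv_le_iff {G : ℝ → ℝ} (hmono : Monotone G)
    (hrc : ∀ v t : ℝ, (∀ z, t < z → v ≤ G z) → v ≤ G t)
    {u : ℝ} (hsmall : ∃ z, G z < u) (hne : ∃ z, u ≤ G z) (y : ℝ) :
    roy_inv G u ≤ y ↔ u ≤ G y := by
  have hbdd : BddBelow {z | u ≤ G z} := roy_bddBelow hmono hsmall
  constructor
  · intro h
    refine hrc u y fun z hz => ?_
    obtain ⟨w, hw, hwz⟩ := exists_lt_of_csInf_lt hne (lt_of_le_of_lt h hz)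
    have hw' : u ≤ G w := hw
    exact hw'.trans (hmono hwz.le)
  · intro h
    exact csInf_le hbdd h

private lemma roy_inv_mono {G : ℝ → ℝ} (hmono : Monotone G) {u₁ u₂ : ℝ} (h : u₁ ≤ u₂)
    (hsmall : ∃ z, G z < u₁) (hne : ∃ z, u₂ ≤ G z) :
    roy_inv G u₁ ≤ roy_inv G u₂ :=
  csInf_le_csInf (roy_bddBelow hmono hsmall) hne (fun z hz => h.trans hz)

private lemma roy_rc {K : ℝ → ℝ}
    (h : ∀ t : ℝ, Tendsto (fun n : ℕ => K (t + 1/((n:ℝ)+1))) atTop (nhds (K t)))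
    (v t : ℝ) (hv : ∀ z, t < z → v ≤ K z) : v ≤ K t := by
  refine ge_of_tendsto (h t) (Eventually.of_forall fun n => hv _ ?_)
  have : (0:ℝ) < 1/((n:ℝ)+1) := by positivity
  linarith

private lemma roy_vol_squeeze {S : Set ℝ} {a b : ℝ}
    (h1 : Set.Ioo a b ⊆ S) (h2 : S ⊆ Set.Icc a b) :
    volume S = ENNReal.ofReal (b - a) := by
  refine le_antisymm ?_ ?_
  · calc volume S ≤ volume (Set.Icc a b) := measure_mono h2
      _ = ENNReal.ofReal (b - a) := Real.volume_Icc
  · calc ENNReal.ofReal (b - a) = volume (Set.Ioo a b) := Real.volume_Ioo.symm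
      _ ≤ volume S := measure_mono h1

/-- The basic two-regime piecewise construction on `(0,1)`. -/
noncomputable def royPiece (p : ℝ) (f g : ℝ → ℝ) (u : ℝ) : ℝ :=
  if 0 < u ∧ u < 1 then (if u < p then f u else g (u - p)) else 0

private lemma royPiece_lt {p : ℝ} {f g : ℝ → ℝ} {u : ℝ}
    (h0 : 0 < u) (h1 : u < 1) (hp : u < p) : royPiece p f g u = f u := by
  rw [royPiece, if_pos ⟨h0, h1⟩, if_pos hp]

private lemma royPiece_ge {p : ℝ} {f g : ℝ → ℝ} {u : ℝ}
    (h0 : 0 < u) (h1 : u < 1) (hp : ¬ u < p) : royPiece p f g u = g (u - p) := by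
  rw [royPiece, if_pos ⟨h0, h1⟩, if_neg hp]

private lemma royPiece_out {p : ℝ} {f g : ℝ → ℝ} {u : ℝ}
    (h : ¬ (0 < u ∧ u < 1)) : royPiece p f g u = 0 := by
  rw [royPiece, if_neg h]

private lemma roy_vol_piece_lt {p : ℝ} (hp1 : p ≤ 1) (f g : ℝ → ℝ) {y c : ℝ}
    (hc0 : 0 ≤ c) (hcp : c ≤ p)
    (hiff : ∀ u, 0 < u → u < p → (f u ≤ y ↔ u ≤ c)) :
    volume (({u : ℝ | royPiece p f g u ≤ y} ∩ Set.Ioo 0 1) ∩ Set.Iio p)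
      = ENNReal.ofReal c := by
  have h := roy_vol_squeeze
    (S := ({u : ℝ | royPiece p f g u ≤ y} ∩ Set.Ioo 0 1) ∩ Set.Iio p) (a := 0) (b := c)
    ?_ ?_
  · rw [h, sub_zero]
  · rintro u ⟨hu0, huc⟩
    have hup : u < p := lt_of_lt_of_le huc hcp
    have hu1 : u < 1 := lt_of_lt_of_le huc (hcp.trans hp1)
    refine ⟨⟨?_, hu0, hu1⟩, hup⟩
    show royPiece p f g u ≤ y
    rw [royPiece_lt hu0 hu1 hup]
    exact (hiff u hu0 hup).mpr huc.le
  · rintro u ⟨⟨hf, hu0, hu1⟩, hup⟩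
    have hf' : royPiece p f g u ≤ y := hf
    rw [royPiece_lt hu0 hu1 hup] at hf'
    exact ⟨hu0.le, (hiff u hu0 hup).mp hf'⟩

private lemma roy_vol_piece_ge {p : ℝ} (hp0 : 0 ≤ p) (f g : ℝ → ℝ) {y c : ℝ}
    (hc0 : 0 ≤ c) (hcq : c ≤ 1 - p)
    (hiff : ∀ v, 0 < v → v < 1 - p → (g v ≤ y ↔ v ≤ c)) :
    volume (({u : ℝ | royPiece p f g u ≤ y} ∩ Set.Ioo 0 1) \ Set.Iio p)
      = ENNReal.ofReal c := by
  have h := roy_vol_squeeze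
    (S := ({u : ℝ | royPiece p f g u ≤ y} ∩ Set.Ioo 0 1) \ Set.Iio p) (a := p) (b := p + c)
    ?_ ?_
  · rw [h, add_sub_cancel_left]
  · rintro u ⟨hpu, hupc⟩
    have hu0 : 0 < u := lt_of_le_of_lt hp0 hpu
    have hu1 : u < 1 := by linarith
    have hnp : ¬ u < p := not_lt.mpr hpu.le
    refine ⟨⟨?_, hu0, hu1⟩, hnp⟩
    show royPiece p f g u ≤ y
    rw [royPiece_ge hu0 hu1 hnp]
    exact (hiff (u - p) (by linarith) (by linarith)).mpr (by linarith)
  · rintro u ⟨⟨hf, hu0, hu1⟩, hnp⟩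
    have hpu : p ≤ u := not_lt.mp hnp
    refine ⟨hpu, ?_⟩
    rcases eq_or_lt_of_le hpu with he | hlt
    · linarith
    · have hf' : royPiece p f g u ≤ y := hf
      rw [royPiece_ge hu0 hu1 (not_lt.mpr hpu)] at hf'
      have := (hiff (u - p) (by linarith) (by linarith)).mp hf'
      linarith

/-- Sharpness of the functional bounds on the marginal potential-outcome distributions in
the Roy model: any pair of right-continuous candidate cdfs `F0, F1` satisfying the
interval lower bounds (the cases with `y1 = -∞` or `y2 = +∞` are expressed via the
pointwise inequalities and the limits at `±∞`) can be rationalized by a Roy model whose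
observables have the same joint law as `(Y, D)`. -/
theorem roy_functional_sharpness
    {Ω : Type*} [MeasurableSpace Ω] (μ : Measure Ω) [IsProbabilityMeasure μ]
    (Y D : Ω → ℝ) (hmY : Measurable Y) (hmD : Measurable D)
    (hDbin : ∀ ω, D ω = 0 ∨ D ω = 1)
    (F0 F1 : ℝ → ℝ)
    (hrc0 : ∀ x, ContinuousWithinAt F0 (Set.Ici x) x)
    (hrc1 : ∀ x, ContinuousWithinAt F1 (Set.Ici x) x)
    (hint0 : ∀ y1 y2 : ℝ, y1 < y2 →
      F0 y2 - F0 y1 ≥ (μ {ω | y1 < Y ω ∧ Y ω ≤ y2 ∧ D ω = 0}).toReal)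
    (hint1 : ∀ y1 y2 : ℝ, y1 < y2 →
      F1 y2 - F1 y1 ≥ (μ {ω | y1 < Y ω ∧ Y ω ≤ y2 ∧ D ω = 1}).toReal)
    (hbot0 : ∀ y : ℝ, F0 y ≥ (μ {ω | Y ω ≤ y ∧ D ω = 0}).toReal
        + (μ {ω | Y ω ≤ y ∧ D ω = 1}).toReal)
    (hbot1 : ∀ y : ℝ, F1 y ≥ (μ {ω | Y ω ≤ y ∧ D ω = 1}).toReal
        + (μ {ω | Y ω ≤ y ∧ D ω = 0}).toReal)
    (htop0 : ∀ y : ℝ, 1 - F0 y ≥ (μ {ω | y < Y ω ∧ D ω = 0}).toReal)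
    (htop1 : ∀ y : ℝ, 1 - F1 y ≥ (μ {ω | y < Y ω ∧ D ω = 1}).toReal)
    (hlim0bot : Tendsto F0 atBot (nhds 0)) (hlim0top : Tendsto F0 atTop (nhds 1))
    (hlim1bot : Tendsto F1 atBot (nhds 0)) (hlim1top : Tendsto F1 atTop (nhds 1)) :
    ∃ (Ω' : Type) (_ : MeasurableSpace Ω') (P : Measure Ω'),
      IsProbabilityMeasure P ∧
      ∃ Y' D' Y0 Y1 : Ω' → ℝ,
        Measurable Y' ∧ Measurable D' ∧
        P.map (fun ω => (Y' ω, D' ω)) = μ.map (fun ω => (Y ω, D ω)) ∧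
        (∀ ω, D' ω = 0 ∨ D' ω = 1) ∧
        (∀ y : ℝ, (P {ω | Y0 ω ≤ y}).toReal = F0 y) ∧
        (∀ y : ℝ, (P {ω | Y1 ω ≤ y}).toReal = F1 y) ∧
        (∀ ω, Y' ω = Y1 ω * D' ω + Y0 ω * (1 - D' ω)) ∧
        (∀ ω, Y1 ω > Y0 ω → D' ω = 1) ∧
        (∀ ω, Y0 ω > Y1 ω → D' ω = 0) := by
  classical
  -- basic measurable sets and finiteness
  have hmufin : ∀ s : Set Ω, μ s ≠ ⊤ := fun s => measure_ne_top μ s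
  have hmDset : ∀ d : ℝ, MeasurableSet {ω | D ω = d} :=
    fun d => hmD (measurableSet_singleton d)
  have hmset : ∀ d y : ℝ, MeasurableSet {ω | Y ω ≤ y ∧ D ω = d} :=
    fun d y => (hmY measurableSet_Iic).inter (hmDset d)
  have hmtop : ∀ d y : ℝ, MeasurableSet {ω | y < Y ω ∧ D ω = d} :=
    fun d y => (hmY measurableSet_Ioi).inter (hmDset d)
  have hmmid : ∀ d y1 y2 : ℝ, MeasurableSet {ω | y1 < Y ω ∧ Y ω ≤ y2 ∧ D ω = d} :=
    fun d y1 y2 => (hmY measurableSet_Ioi).inter ((hmY measurableSet_Iic).inter (hmDset d))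
  -- abbreviations
  set p : ℝ := (μ {ω | D ω = 1}).toReal with hpdef
  set q : ℝ := (μ {ω | D ω = 0}).toReal with hqdef
  set G1 : ℝ → ℝ := fun y => (μ {ω | Y ω ≤ y ∧ D ω = 1}).toReal with hG1def
  set G0 : ℝ → ℝ := fun y => (μ {ω | Y ω ≤ y ∧ D ω = 0}).toReal with hG0def
  set H1 : ℝ → ℝ := fun y => F1 y - G1 y with hH1def
  set H0 : ℝ → ℝ := fun y => F0 y - G0 y with hH0def
  have hG1y : ∀ y, G1 y = (μ {ω | Y ω ≤ y ∧ D ω = 1}).toReal := fun y => by rw [hG1def]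
  have hG0y : ∀ y, G0 y = (μ {ω | Y ω ≤ y ∧ D ω = 0}).toReal := fun y => by rw [hG0def]
  have hH1y : ∀ y, H1 y = F1 y - G1 y := fun y => by rw [hH1def]
  have hH0y : ∀ y, H0 y = F0 y - G0 y := fun y => by rw [hH0def]
  -- additivity helper
  have hadd : ∀ s t : Set Ω, MeasurableSet t → (∀ ω, ω ∈ s → ω ∉ t) →
      (μ (s ∪ t)).toReal = (μ s).toReal + (μ t).toReal := by
    intro s t ht hdisj
    rw [measure_union (Set.disjoint_left.mpr hdisj) ht,
      ENNReal.toReal_add (hmufin s) (hmufin t)]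
  -- p + q = 1
  have hpq : p + q = 1 := by
    have hU : ({ω | D ω = 1} : Set Ω) ∪ {ω | D ω = 0} = Set.univ := by
      ext ω
      simp only [Set.mem_union, Set.mem_setOf_eq, Set.mem_univ, iff_true]
      exact (hDbin ω).symm
    have h := hadd {ω | D ω = 1} {ω | D ω = 0} (hmDset 0)
      (fun ω h1 h0 => one_ne_zero (h1.symm.trans h0))
    rw [hU] at h
    simp only [measure_univ, ENNReal.toReal_one] at h
    rw [hpdef, hqdef]
    exact h.symm
  have hq1p : q = 1 - p := by linarith
  have hp0 : 0 ≤ p := ENNReal.toReal_nonneg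
  have hq0 : 0 ≤ q := ENNReal.toReal_nonneg
  have hp1 : p ≤ 1 := by linarith
  -- total additivity
  have htot : ∀ y, (μ {ω | Y ω ≤ y}).toReal = G1 y + G0 y := by
    intro y
    have hU : ({ω | Y ω ≤ y ∧ D ω = 1} : Set Ω) ∪ {ω | Y ω ≤ y ∧ D ω = 0}
        = {ω | Y ω ≤ y} := by
      ext ω
      simp only [Set.mem_union, Set.mem_setOf_eq]
      constructor
      · rintro (⟨h, _⟩ | ⟨h, _⟩) <;> exact h
      · intro h
        rcases hDbin ω with h0 | h1
        · exact Or.inr ⟨h, h0⟩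
        · exact Or.inl ⟨h, h1⟩
    have h := hadd {ω | Y ω ≤ y ∧ D ω = 1} {ω | Y ω ≤ y ∧ D ω = 0} (hmset 0 y)
      (fun ω h1 h0 => one_ne_zero (h1.2.symm.trans h0.2))
    rw [hU] at h
    rw [h, hG1y, hG0y]
  -- complement additivity within each treatment arm
  have htop1' : ∀ y, (μ {ω | y < Y ω ∧ D ω = 1}).toReal = p - G1 y := by
    intro y
    have hU : ({ω | Y ω ≤ y ∧ D ω = 1} : Set Ω) ∪ {ω | y < Y ω ∧ D ω = 1}
        = {ω | D ω = 1} := by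
      ext ω
      simp only [Set.mem_union, Set.mem_setOf_eq]
      constructor
      · rintro (⟨_, h⟩ | ⟨_, h⟩) <;> exact h
      · intro h
        rcases le_or_gt (Y ω) y with hle | hlt
        · exact Or.inl ⟨hle, h⟩
        · exact Or.inr ⟨hlt, h⟩
    have h := hadd {ω | Y ω ≤ y ∧ D ω = 1} {ω | y < Y ω ∧ D ω = 1} (hmtop 1 y)
      (fun ω h1 h2 => absurd h2.1 (not_lt.mpr h1.1))
    rw [hU] at h
    rw [hpdef] at *
    rw [hG1y]
    linarith [h]
  have htop0' : ∀ y, (μ {ω | y < Y ω ∧ D ω = 0}).toReal = q - G0 y := by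
    intro y
    have hU : ({ω | Y ω ≤ y ∧ D ω = 0} : Set Ω) ∪ {ω | y < Y ω ∧ D ω = 0}
        = {ω | D ω = 0} := by
      ext ω
      simp only [Set.mem_union, Set.mem_setOf_eq]
      constructor
      · rintro (⟨_, h⟩ | ⟨_, h⟩) <;> exact h
      · intro h
        rcases le_or_gt (Y ω) y with hle | hlt
        · exact Or.inl ⟨hle, h⟩
        · exact Or.inr ⟨hlt, h⟩
    have h := hadd {ω | Y ω ≤ y ∧ D ω = 0} {ω | y < Y ω ∧ D ω = 0} (hmtop 0 y)
      (fun ω h1 h2 => absurd h2.1 (not_lt.mpr h1.1))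
    rw [hU] at h
    rw [hqdef] at *
    rw [hG0y]
    linarith [h]
  -- interval additivity
  have hmid1 : ∀ y1 y2 : ℝ, y1 < y2 →
      (μ {ω | y1 < Y ω ∧ Y ω ≤ y2 ∧ D ω = 1}).toReal = G1 y2 - G1 y1 := by
    intro y1 y2 h12
    have hU : ({ω | Y ω ≤ y1 ∧ D ω = 1} : Set Ω) ∪ {ω | y1 < Y ω ∧ Y ω ≤ y2 ∧ D ω = 1}
        = {ω | Y ω ≤ y2 ∧ D ω = 1} := by
      ext ω
      simp only [Set.mem_union, Set.mem_setOf_eq]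
      constructor
      · rintro (⟨h, hd⟩ | ⟨_, h, hd⟩)
        · exact ⟨h.trans h12.le, hd⟩
        · exact ⟨h, hd⟩
      · rintro ⟨h, hd⟩
        rcases le_or_gt (Y ω) y1 with hle | hlt
        · exact Or.inl ⟨hle, hd⟩
        · exact Or.inr ⟨hlt, h, hd⟩
    have h := hadd {ω | Y ω ≤ y1 ∧ D ω = 1} {ω | y1 < Y ω ∧ Y ω ≤ y2 ∧ D ω = 1} (hmmid 1 y1 y2)
      (fun ω h1 h2 => absurd h2.1 (not_lt.mpr h1.1))
    rw [hU] at h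
    rw [hG1y y1, hG1y y2] at *
    linarith [h]
  have hmid0 : ∀ y1 y2 : ℝ, y1 < y2 →
      (μ {ω | y1 < Y ω ∧ Y ω ≤ y2 ∧ D ω = 0}).toReal = G0 y2 - G0 y1 := by
    intro y1 y2 h12
    have hU : ({ω | Y ω ≤ y1 ∧ D ω = 0} : Set Ω) ∪ {ω | y1 < Y ω ∧ Y ω ≤ y2 ∧ D ω = 0}
        = {ω | Y ω ≤ y2 ∧ D ω = 0} := by
      ext ω
      simp only [Set.mem_union, Set.mem_setOf_eq]
      constructor
      · rintro (⟨h, hd⟩ | ⟨_, h, hd⟩)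
        · exact ⟨h.trans h12.le, hd⟩
        · exact ⟨h, hd⟩
      · rintro ⟨h, hd⟩
        rcases le_or_gt (Y ω) y1 with hle | hlt
        · exact Or.inl ⟨hle, hd⟩
        · exact Or.inr ⟨hlt, h, hd⟩
    have h := hadd {ω | Y ω ≤ y1 ∧ D ω = 0} {ω | y1 < Y ω ∧ Y ω ≤ y2 ∧ D ω = 0} (hmmid 0 y1 y2)
      (fun ω h1 h2 => absurd h2.1 (not_lt.mpr h1.1))
    rw [hU] at h
    rw [hG0y y1, hG0y y2] at *
    linarith [h]
  -- monotonicity / bounds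
  have monoG1 : Monotone G1 := by
    intro a b hab
    rw [hG1y a, hG1y b]
    exact ENNReal.toReal_mono (hmufin _) (measure_mono fun ω h => ⟨h.1.trans hab, h.2⟩)
  have monoG0 : Monotone G0 := by
    intro a b hab
    rw [hG0y a, hG0y b]
    exact ENNReal.toReal_mono (hmufin _) (measure_mono fun ω h => ⟨h.1.trans hab, h.2⟩)
  have hG1nn : ∀ y, 0 ≤ G1 y := by intro y; rw [hG1y]; exact ENNReal.toReal_nonneg
  have hG0nn : ∀ y, 0 ≤ G0 y := by intro y; rw [hG0y]; exact ENNReal.toReal_nonneg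
  have hG1le : ∀ y, G1 y ≤ p := by
    intro y
    rw [hG1y, hpdef]
    exact ENNReal.toReal_mono (hmufin _) (measure_mono fun ω h => h.2)
  have hG0le : ∀ y, G0 y ≤ 1 - p := by
    intro y
    rw [← hq1p, hG0y, hqdef]
    exact ENNReal.toReal_mono (hmufin _) (measure_mono fun ω h => h.2)
  have monoH1 : Monotone H1 := by
    intro a b hab
    rcases eq_or_lt_of_le hab with rfl | h
    · exact le_rfl
    · have h1 := hint1 a b h
      rw [hmid1 a b h] at h1
      rw [hH1y a, hH1y b]
      linarith
  have monoH0 : Monotone H0 := by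
    intro a b hab
    rcases eq_or_lt_of_le hab with rfl | h
    · exact le_rfl
    · have h1 := hint0 a b h
      rw [hmid0 a b h] at h1
      rw [hH0y a, hH0y b]
      linarith
  have hH1geG0 : ∀ y, G0 y ≤ H1 y := by
    intro y
    have h := hbot1 y
    rw [← hG1y y, ← hG0y y] at h
    rw [hH1y]
    linarith
  have hH0geG1 : ∀ y, G1 y ≤ H0 y := by
    intro y
    have h := hbot0 y
    rw [← hG1y y, ← hG0y y] at h
    rw [hH0y]
    linarith
  have hH1nn : ∀ y, 0 ≤ H1 y := fun y => (hG0nn y).trans (hH1geG0 y)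
  have hH0nn : ∀ y, 0 ≤ H0 y := fun y => (hG1nn y).trans (hH0geG1 y)
  have hH1le : ∀ y, H1 y ≤ 1 - p := by
    intro y
    have h := htop1 y
    rw [htop1' y] at h
    rw [hH1y]
    linarith
  have hH0le : ∀ y, H0 y ≤ p := by
    intro y
    have h := htop0 y
    rw [htop0' y] at h
    rw [hH0y]
    linarith
  -- small / sup facts for G1
  have hG1small : ∀ u : ℝ, 0 < u → ∃ z, G1 z < u := by
    intro u hu
    have hanti : Antitone (fun n : ℕ => {ω | Y ω ≤ -(n:ℝ) ∧ D ω = 1}) := by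
      intro m n hmn ω hω
      have : -(n:ℝ) ≤ -(m:ℝ) := neg_le_neg (Nat.cast_le.mpr hmn)
      exact ⟨hω.1.trans this, hω.2⟩
    have hempty : (⋂ n : ℕ, {ω | Y ω ≤ -(n:ℝ) ∧ D ω = 1}) = (∅ : Set Ω) := by
      ext ω
      simp only [Set.mem_iInter, Set.mem_setOf_eq, Set.mem_empty_iff_false, iff_false,
        not_forall]
      obtain ⟨n, hn⟩ := exists_nat_gt (-(Y ω))
      exact ⟨n, fun h => absurd h.1 (by push_neg; linarith)⟩
    have hfin : ∃ n : ℕ, μ {ω | Y ω ≤ -(n:ℝ) ∧ D ω = 1} ≠ ⊤ := ⟨0, hmufin _⟩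
    have hT := tendsto_measure_iInter_atTop (μ := μ)
      (fun n : ℕ => (hmset 1 (-(n:ℝ))).nullMeasurableSet) hanti hfin
    rw [hempty, measure_empty] at hT
    have hT2 := (ENNReal.tendsto_toReal (by simp : (0:ENNReal) ≠ ⊤)).comp hT
    simp only [Function.comp_def, ENNReal.toReal_zero] at hT2
    obtain ⟨n, hn⟩ := (hT2.eventually_lt_const hu).exists
    exact ⟨-(n:ℝ), by rw [hG1y]; exact hn⟩
  have hG0small : ∀ u : ℝ, 0 < u → ∃ z, G0 z < u := by
    intro u hu
    have hanti : Antitone (fun n : ℕ => {ω | Y ω ≤ -(n:ℝ) ∧ D ω = 0}) := by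
      intro m n hmn ω hω
      have : -(n:ℝ) ≤ -(m:ℝ) := neg_le_neg (Nat.cast_le.mpr hmn)
      exact ⟨hω.1.trans this, hω.2⟩
    have hempty : (⋂ n : ℕ, {ω | Y ω ≤ -(n:ℝ) ∧ D ω = 0}) = (∅ : Set Ω) := by
      ext ω
      simp only [Set.mem_iInter, Set.mem_setOf_eq, Set.mem_empty_iff_false, iff_false,
        not_forall]
      obtain ⟨n, hn⟩ := exists_nat_gt (-(Y ω))
      exact ⟨n, fun h => absurd h.1 (by push_neg; linarith)⟩
    have hfin : ∃ n : ℕ, μ {ω | Y ω ≤ -(n:ℝ) ∧ D ω = 0} ≠ ⊤ := ⟨0, hmufin _⟩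
    have hT := tendsto_measure_iInter_atTop (μ := μ)
      (fun n : ℕ => (hmset 0 (-(n:ℝ))).nullMeasurableSet) hanti hfin
    rw [hempty, measure_empty] at hT
    have hT2 := (ENNReal.tendsto_toReal (by simp : (0:ENNReal) ≠ ⊤)).comp hT
    simp only [Function.comp_def, ENNReal.toReal_zero] at hT2
    obtain ⟨n, hn⟩ := (hT2.eventually_lt_const hu).exists
    exact ⟨-(n:ℝ), by rw [hG0y]; exact hn⟩
  have hG1sup : ∀ u : ℝ, u < p → ∃ z, u ≤ G1 z := by
    intro u hu
    have hmon : Monotone (fun n : ℕ => {ω | Y ω ≤ (n:ℝ) ∧ D ω = 1}) := by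
      intro m n hmn ω hω
      exact ⟨hω.1.trans (Nat.cast_le.mpr hmn), hω.2⟩
    have hUn : (⋃ n : ℕ, {ω | Y ω ≤ (n:ℝ) ∧ D ω = 1}) = {ω | D ω = 1} := by
      ext ω
      simp only [Set.mem_iUnion, Set.mem_setOf_eq]
      constructor
      · rintro ⟨n, _, h⟩; exact h
      · intro h
        obtain ⟨n, hn⟩ := exists_nat_ge (Y ω)
        exact ⟨n, hn, h⟩
    have hT := tendsto_measure_iUnion_atTop (μ := μ) hmon
    rw [hUn] at hT
    have hT2 := (ENNReal.tendsto_toReal (hmufin _)).comp hT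
    simp only [Function.comp_def] at hT2
    rw [← hpdef] at hT2
    obtain ⟨n, hn⟩ := (hT2.eventually_const_lt hu).exists
    exact ⟨(n:ℝ), by rw [hG1y]; exact hn.le⟩
  have hG0sup : ∀ u : ℝ, u < 1 - p → ∃ z, u ≤ G0 z := by
    intro u hu
    have hmon : Monotone (fun n : ℕ => {ω | Y ω ≤ (n:ℝ) ∧ D ω = 0}) := by
      intro m n hmn ω hω
      exact ⟨hω.1.trans (Nat.cast_le.mpr hmn), hω.2⟩
    have hUn : (⋃ n : ℕ, {ω | Y ω ≤ (n:ℝ) ∧ D ω = 0}) = {ω | D ω = 0} := by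
      ext ω
      simp only [Set.mem_iUnion, Set.mem_setOf_eq]
      constructor
      · rintro ⟨n, _, h⟩; exact h
      · intro h
        obtain ⟨n, hn⟩ := exists_nat_ge (Y ω)
        exact ⟨n, hn, h⟩
    have hT := tendsto_measure_iUnion_atTop (μ := μ) hmon
    rw [hUn] at hT
    have hT2 := (ENNReal.tendsto_toReal (hmufin _)).comp hT
    simp only [Function.comp_def] at hT2
    rw [← hqdef] at hT2
    obtain ⟨n, hn⟩ := (hT2.eventually_const_lt (by linarith : u < q)).exists
    exact ⟨(n:ℝ), by rw [hG0y]; exact hn.le⟩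
  have hH1small : ∀ u : ℝ, 0 < u → ∃ z, H1 z < u := by
    intro u hu
    obtain ⟨z, hz⟩ := (hlim1bot.eventually_lt_const hu).exists
    refine ⟨z, ?_⟩
    have := hG1nn z
    rw [hH1y]
    linarith
  have hH0small : ∀ u : ℝ, 0 < u → ∃ z, H0 z < u := by
    intro u hu
    obtain ⟨z, hz⟩ := (hlim0bot.eventually_lt_const hu).exists
    refine ⟨z, ?_⟩
    have := hG0nn z
    rw [hH0y]
    linarith
  have hH1sup : ∀ v : ℝ, v < 1 - p → ∃ z, v ≤ H1 z := by
    intro v hv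
    obtain ⟨z, hz⟩ := (hlim1top.eventually_const_lt (show v + p < 1 by linarith)).exists
    refine ⟨z, ?_⟩
    have := hG1le z
    rw [hH1y]
    linarith
  have hH0sup : ∀ v : ℝ, v < p → ∃ z, v ≤ H0 z := by
    intro v hv
    obtain ⟨z, hz⟩ := (hlim0top.eventually_const_lt (show v + (1-p) < 1 by linarith)).exists
    refine ⟨z, ?_⟩
    have := hG0le z
    rw [hH0y]
    linarith
  -- right-continuity (sequential) for all four functions
  have hseq : ∀ t : ℝ, Tendsto (fun n : ℕ => t + 1/((n:ℝ)+1)) atTop (nhdsWithin t (Set.Ici t)) := by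
    intro t
    refine tendsto_nhdsWithin_iff.mpr ⟨?_, Eventually.of_forall fun n => ?_⟩
    · have h0 : Tendsto (fun n : ℕ => 1/((n:ℝ)+1)) atTop (nhds 0) :=
        tendsto_one_div_add_atTop_nhds_zero_nat
      have := tendsto_const_nhds (x := t) (f := atTop (α := ℕ))
      simpa using this.add h0
    · simp only [Set.mem_Ici]
      have : (0:ℝ) < 1/((n:ℝ)+1) := by positivity
      linarith
  have htendG : ∀ d : ℝ, ∀ t : ℝ,
      Tendsto (fun n : ℕ => (μ {ω | Y ω ≤ t + 1/((n:ℝ)+1) ∧ D ω = d}).toReal) atTop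
        (nhds ((μ {ω | Y ω ≤ t ∧ D ω = d}).toReal)) := by
    intro d t
    have hanti : Antitone (fun n : ℕ => {ω | Y ω ≤ t + 1/((n:ℝ)+1) ∧ D ω = d}) := by
      intro m n hmn ω hω
      have hle : 1/((n:ℝ)+1) ≤ 1/((m:ℝ)+1) := by
        apply one_div_le_one_div_of_le
        · positivity
        · have : (m:ℝ) ≤ (n:ℝ) := Nat.cast_le.mpr hmn
          linarith
      exact ⟨hω.1.trans (by linarith), hω.2⟩
    have hint : (⋂ n : ℕ, {ω | Y ω ≤ t + 1/((n:ℝ)+1) ∧ D ω = d})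
        = {ω | Y ω ≤ t ∧ D ω = d} := by
      ext ω
      simp only [Set.mem_iInter, Set.mem_setOf_eq]
      constructor
      · intro h
        refine ⟨?_, (h 0).2⟩
        by_contra hc
        push_neg at hc
        obtain ⟨n, hn⟩ := exists_nat_one_div_lt (sub_pos.mpr hc)
        exact absurd (h n).1 (by push_neg; linarith)
      · intro h n
        have : (0:ℝ) < 1/((n:ℝ)+1) := by positivity
        exact ⟨h.1.trans (by linarith), h.2⟩
    have hfin : ∃ n : ℕ, μ {ω | Y ω ≤ t + 1/((n:ℝ)+1) ∧ D ω = d} ≠ ⊤ := ⟨0, hmufin _⟩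
    have hT := tendsto_measure_iInter_atTop (μ := μ)
      (fun n : ℕ => (hmset d (t + 1/((n:ℝ)+1))).nullMeasurableSet) hanti hfin
    rw [hint] at hT
    have hT2 := (ENNReal.tendsto_toReal (hmufin _)).comp hT
    simpa only [Function.comp_def] using hT2
  have htendG1 : ∀ t : ℝ, Tendsto (fun n : ℕ => G1 (t + 1/((n:ℝ)+1))) atTop (nhds (G1 t)) := by
    intro t
    simp only [hG1y]
    exact htendG 1 t
  have htendG0 : ∀ t : ℝ, Tendsto (fun n : ℕ => G0 (t + 1/((n:ℝ)+1))) atTop (nhds (G0 t)) := by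
    intro t
    simp only [hG0y]
    exact htendG 0 t
  have rcG1 : ∀ v t : ℝ, (∀ z, t < z → v ≤ G1 z) → v ≤ G1 t := roy_rc htendG1
  have rcG0 : ∀ v t : ℝ, (∀ z, t < z → v ≤ G0 z) → v ≤ G0 t := roy_rc htendG0
  have htendF1 : ∀ t : ℝ, Tendsto (fun n : ℕ => F1 (t + 1/((n:ℝ)+1))) atTop (nhds (F1 t)) :=
    fun t => (hrc1 t).tendsto.comp (hseq t)
  have htendF0 : ∀ t : ℝ, Tendsto (fun n : ℕ => F0 (t + 1/((n:ℝ)+1))) atTop (nhds (F0 t)) :=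
    fun t => (hrc0 t).tendsto.comp (hseq t)
  have rcH1 : ∀ v t : ℝ, (∀ z, t < z → v ≤ H1 z) → v ≤ H1 t := by
    apply roy_rc
    intro t
    simp only [hH1y]
    exact (htendF1 t).sub (htendG1 t)
  have rcH0 : ∀ v t : ℝ, (∀ z, t < z → v ≤ H0 z) → v ≤ H0 t := by
    apply roy_rc
    intro t
    simp only [hH0y]
    exact (htendF0 t).sub (htendG0 t)
  -- the witnesses
  set E : Set ℝ := Set.Ioo 0 1 with hEdef
  set P : Measure ℝ := volume.restrict E with hPdef
  have hmE : MeasurableSet E := measurableSet_Ioo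
  have hProb : IsProbabilityMeasure P := by
    constructor
    rw [hPdef, Measure.restrict_apply_univ, hEdef, Real.volume_Ioo]
    norm_num
  have hPapp : ∀ S : Set ℝ, P S = volume (S ∩ E) :=
    fun S => Measure.restrict_apply' hmE
  -- quantile-coupling equivalences
  have hiffG1 : ∀ y : ℝ, ∀ u, 0 < u → u < p → (roy_inv G1 u ≤ y ↔ u ≤ G1 y) :=
    fun y u h0 hup => roy_inv_le_iff monoG1 rcG1 (hG1small u h0) (hG1sup u hup) y
  have hiffG0 : ∀ y : ℝ, ∀ v, 0 < v → v < 1 - p → (roy_inv G0 v ≤ y ↔ v ≤ G0 y) :=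
    fun y v h0 hv => roy_inv_le_iff monoG0 rcG0 (hG0small v h0) (hG0sup v hv) y
  have hiffH1 : ∀ y : ℝ, ∀ v, 0 < v → v < 1 - p → (roy_inv H1 v ≤ y ↔ v ≤ H1 y) :=
    fun y v h0 hv => roy_inv_le_iff monoH1 rcH1 (hH1small v h0) (hH1sup v hv) y
  have hiffH0 : ∀ y : ℝ, ∀ u, 0 < u → u < p → (roy_inv H0 u ≤ y ↔ u ≤ H0 y) :=
    fun y u h0 hu => roy_inv_le_iff monoH0 rcH0 (hH0small u h0) (hH0sup u hu) y
  -- packaged volume computations for the pieces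
  have hvY'lt : ∀ y : ℝ,
      volume (({u : ℝ | royPiece p (roy_inv G1) (roy_inv G0) u ≤ y} ∩ Set.Ioo 0 1) ∩ Set.Iio p)
        = ENNReal.ofReal (G1 y) :=
    fun y => roy_vol_piece_lt hp1 _ _ (hG1nn y) (hG1le y) (hiffG1 y)
  have hvY'ge : ∀ y : ℝ,
      volume (({u : ℝ | royPiece p (roy_inv G1) (roy_inv G0) u ≤ y} ∩ Set.Ioo 0 1) \ Set.Iio p)
        = ENNReal.ofReal (G0 y) :=
    fun y => roy_vol_piece_ge hp0 _ _ (hG0nn y) (hG0le y) (hiffG0 y)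
  have hvY1lt : ∀ y : ℝ,
      volume (({u : ℝ | royPiece p (roy_inv G1)
          (fun c => min (roy_inv H1 c) (roy_inv G0 c)) u ≤ y} ∩ Set.Ioo 0 1) ∩ Set.Iio p)
        = ENNReal.ofReal (G1 y) :=
    fun y => roy_vol_piece_lt hp1 _ _ (hG1nn y) (hG1le y) (hiffG1 y)
  have hvY1ge : ∀ y : ℝ,
      volume (({u : ℝ | royPiece p (roy_inv G1)
          (fun c => min (roy_inv H1 c) (roy_inv G0 c)) u ≤ y} ∩ Set.Ioo 0 1) \ Set.Iio p)
        = ENNReal.ofReal (H1 y) := by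
    intro y
    refine roy_vol_piece_ge hp0 _ _ (hH1nn y) (hH1le y) ?_
    intro v h0 hv
    constructor
    · intro h
      rcases min_le_iff.mp h with h1 | h2
      · exact (hiffH1 y v h0 hv).mp h1
      · exact ((hiffG0 y v h0 hv).mp h2).trans (hH1geG0 y)
    · intro h
      exact min_le_of_left_le ((hiffH1 y v h0 hv).mpr h)
  have hvY0lt : ∀ y : ℝ,
      volume (({u : ℝ | royPiece p (fun u => min (roy_inv H0 u) (roy_inv G1 u))
          (roy_inv G0) u ≤ y} ∩ Set.Ioo 0 1) ∩ Set.Iio p)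
        = ENNReal.ofReal (H0 y) := by
    intro y
    refine roy_vol_piece_lt hp1 _ _ (hH0nn y) (hH0le y) ?_
    intro u h0 hu
    constructor
    · intro h
      rcases min_le_iff.mp h with h1 | h2
      · exact (hiffH0 y u h0 hu).mp h1
      · exact ((hiffG1 y u h0 hu).mp h2).trans (hH0geG1 y)
    · intro h
      exact min_le_of_left_le ((hiffH0 y u h0 hu).mpr h)
  have hvY0ge : ∀ y : ℝ,
      volume (({u : ℝ | royPiece p (fun u => min (roy_inv H0 u) (roy_inv G1 u))
          (roy_inv G0) u ≤ y} ∩ Set.Ioo 0 1) \ Set.Iio p)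
        = ENNReal.ofReal (G0 y) :=
    fun y => roy_vol_piece_ge hp0 _ _ (hG0nn y) (hG0le y) (hiffG0 y)
  -- measurability of Y'
  have hmY' : Measurable (royPiece p (roy_inv G1) (roy_inv G0)) := by
    apply measurable_of_Iio
    intro x
    have hdec : royPiece p (roy_inv G1) (roy_inv G0) ⁻¹' Set.Iio x
        = {u : ℝ | (0 < u ∧ u < 1) ∧ u < p ∧ roy_inv G1 u < x}
          ∪ {u : ℝ | (0 < u ∧ u < 1) ∧ ¬ u < p ∧ roy_inv G0 (u - p) < x}
          ∪ {u : ℝ | ¬ (0 < u ∧ u < 1) ∧ 0 < x} := by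
      ext u
      simp only [Set.mem_preimage, Set.mem_Iio, Set.mem_union, Set.mem_setOf_eq]
      by_cases h1 : 0 < u ∧ u < 1
      · by_cases h2 : u < p
        · rw [royPiece_lt h1.1 h1.2 h2]
          constructor
          · intro h; exact Or.inl (Or.inl ⟨h1, h2, h⟩)
          · rintro ((⟨_, _, h⟩ | ⟨_, hnp, _⟩) | ⟨hn1, _⟩)
            · exact h
            · exact absurd h2 hnp
            · exact absurd h1 hn1
        · rw [royPiece_ge h1.1 h1.2 h2]
          constructor
          · intro h; exact Or.inl (Or.inr ⟨h1, h2, h⟩)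
          · rintro ((⟨_, hp2, _⟩ | ⟨_, _, h⟩) | ⟨hn1, _⟩)
            · exact absurd hp2 h2
            · exact h
            · exact absurd h1 hn1
      · rw [royPiece_out h1]
        constructor
        · intro h; exact Or.inr ⟨h1, h⟩
        · rintro ((⟨hh, _⟩ | ⟨hh, _⟩) | ⟨_, h⟩)
          · exact absurd hh h1
          · exact absurd hh h1
          · exact h
    rw [hdec]
    have hmA : MeasurableSet {u : ℝ | (0 < u ∧ u < 1) ∧ u < p ∧ roy_inv G1 u < x} := by
      apply Set.OrdConnected.measurableSet
      constructor
      intro u₁ h₁ u₂ h₂ v hv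
      obtain ⟨⟨h10, _⟩, _, _⟩ := h₁
      obtain ⟨⟨_, h21⟩, h2p, h2x⟩ := h₂
      have hv0 : 0 < v := lt_of_lt_of_le h10 hv.1
      refine ⟨⟨hv0, lt_of_le_of_lt hv.2 h21⟩, lt_of_le_of_lt hv.2 h2p, ?_⟩
      exact lt_of_le_of_lt
        (roy_inv_mono monoG1 hv.2 (hG1small v hv0) (hG1sup u₂ h2p)) h2x
    have hmB : MeasurableSet {u : ℝ | (0 < u ∧ u < 1) ∧ ¬ u < p ∧ roy_inv G0 (u - p) < x} := by
      apply Set.OrdConnected.measurableSet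
      constructor
      intro u₁ h₁ u₂ h₂ v hv
      obtain ⟨⟨h10, _⟩, h1p, h1x⟩ := h₁
      obtain ⟨⟨_, h21⟩, _, h2x⟩ := h₂
      have hpu1 : p ≤ u₁ := not_lt.mp h1p
      have hpv : p ≤ v := hpu1.trans hv.1
      refine ⟨⟨lt_of_lt_of_le h10 hv.1, lt_of_le_of_lt hv.2 h21⟩, not_lt.mpr hpv, ?_⟩
      rcases eq_or_lt_of_le hpv with he | hlt
      · have hveq : v = u₁ := le_antisymm (he ▸ hpu1) hv.1
        rw [hveq]
        exact h1x
      · refine lt_of_le_of_lt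
          (roy_inv_mono monoG0 (by linarith [hv.2] : v - p ≤ u₂ - p)
            (hG0small _ (by linarith)) (hG0sup (u₂ - p) ?_)) h2x
        have hu2v : v ≤ u₂ := hv.2
        linarith
    have hmC : MeasurableSet {u : ℝ | ¬ (0 < u ∧ u < 1) ∧ 0 < x} := by
      by_cases hx : (0:ℝ) < x
      · have : {u : ℝ | ¬ (0 < u ∧ u < 1) ∧ 0 < x} = (Set.Ioo (0:ℝ) 1)ᶜ := by
          ext u
          simp [hx, Set.mem_Ioo]
        rw [this]
        exact measurableSet_Ioo.compl
      · have : {u : ℝ | ¬ (0 < u ∧ u < 1) ∧ 0 < x} = (∅ : Set ℝ) := by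
          ext u
          simp [hx]
        rw [this]
        exact MeasurableSet.empty
    exact (hmA.union hmB).union hmC
  -- measurability and binarity of D'
  have hD'bin : ∀ u : ℝ, royPiece p (fun _ => (1:ℝ)) (fun _ => (0:ℝ)) u = 0 ∨
      royPiece p (fun _ => (1:ℝ)) (fun _ => (0:ℝ)) u = 1 := by
    intro u
    by_cases h1 : 0 < u ∧ u < 1
    · by_cases h2 : u < p
      · exact Or.inr (royPiece_lt h1.1 h1.2 h2)
      · exact Or.inl (royPiece_ge h1.1 h1.2 h2)
    · exact Or.inl (royPiece_out h1)
  have hmD' : Measurable (royPiece p (fun _ => (1:ℝ)) (fun _ => (0:ℝ))) := by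
    have heq : royPiece p (fun _ => (1:ℝ)) (fun _ => (0:ℝ))
        = (Set.Ioo (0:ℝ) 1 ∩ Set.Iio p).indicator (fun _ => (1:ℝ)) := by
      funext u
      rw [Set.indicator_apply]
      by_cases h1 : 0 < u ∧ u < 1
      · by_cases h2 : u < p
        · rw [royPiece_lt h1.1 h1.2 h2, if_pos ⟨h1, h2⟩]
        · rw [royPiece_ge h1.1 h1.2 h2, if_neg (fun hc => h2 hc.2)]
      · rw [royPiece_out h1, if_neg (fun hc => h1 hc.1)]
    rw [heq]
    exact measurable_const.indicator (measurableSet_Ioo.inter measurableSet_Iio)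
  -- cdf computations
  have hcdf1 : ∀ y : ℝ, (P {u : ℝ | royPiece p (roy_inv G1)
      (fun c => min (roy_inv H1 c) (roy_inv G0 c)) u ≤ y}).toReal = F1 y := by
    intro y
    rw [hPapp, hEdef,
      ← measure_inter_add_diff ({u : ℝ | royPiece p (roy_inv G1)
        (fun c => min (roy_inv H1 c) (roy_inv G0 c)) u ≤ y} ∩ Set.Ioo 0 1)
        (measurableSet_Iio (a := p)),
      hvY1lt y, hvY1ge y, ← ENNReal.ofReal_add (hG1nn y) (hH1nn y),
      ENNReal.toReal_ofReal (by linarith [hG1nn y, hH1nn y])]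
    have := hH1y y
    linarith
  have hcdf0 : ∀ y : ℝ, (P {u : ℝ | royPiece p (fun u => min (roy_inv H0 u) (roy_inv G1 u))
      (roy_inv G0) u ≤ y}).toReal = F0 y := by
    intro y
    rw [hPapp, hEdef,
      ← measure_inter_add_diff ({u : ℝ | royPiece p (fun u => min (roy_inv H0 u) (roy_inv G1 u))
        (roy_inv G0) u ≤ y} ∩ Set.Ioo 0 1)
        (measurableSet_Iio (a := p)),
      hvY0lt y, hvY0ge y, ← ENNReal.ofReal_add (hH0nn y) (hG0nn y),
      ENNReal.toReal_ofReal (by linarith [hH0nn y, hG0nn y])]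
    have := hH0y y
    linarith
  -- joint law
  have hmf : Measurable (fun ω => (Y ω, D ω)) := hmY.prodMk hmD
  have hmf' : Measurable (fun u : ℝ => (royPiece p (roy_inv G1) (roy_inv G0) u,
      royPiece p (fun _ => (1:ℝ)) (fun _ => (0:ℝ)) u)) := hmY'.prodMk hmD'
  have hjoint : P.map (fun u : ℝ => (royPiece p (roy_inv G1) (roy_inv G0) u,
      royPiece p (fun _ => (1:ℝ)) (fun _ => (0:ℝ)) u)) = μ.map (fun ω => (Y ω, D ω)) := by
    have hIic : MeasurableSpace.generateFrom (Set.range (Set.Iic : ℝ → Set ℝ))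
        = (inferInstance : MeasurableSpace ℝ) :=
      (borel_eq_generateFrom_Iic ℝ).symm.trans (BorelSpace.measurable_eq (α := ℝ)).symm
    have hspan : IsCountablySpanning (Set.range (Set.Iic : ℝ → Set ℝ)) := by
      refine ⟨fun n => Set.Iic (n:ℝ), fun n => ⟨(n:ℝ), rfl⟩, ?_⟩
      ext x
      simp only [Set.mem_iUnion, Set.mem_Iic, Set.mem_univ, iff_true]
      exact exists_nat_ge x
    haveI : IsProbabilityMeasure (P.map (fun u : ℝ => (royPiece p (roy_inv G1) (roy_inv G0) u,
        royPiece p (fun _ => (1:ℝ)) (fun _ => (0:ℝ)) u))) :=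
      Measure.isProbabilityMeasure_map hmf'.aemeasurable
    haveI : IsProbabilityMeasure (μ.map (fun ω => (Y ω, D ω))) :=
      Measure.isProbabilityMeasure_map hmf.aemeasurable
    refine ext_of_generate_finite
      (Set.image2 (· ×ˢ ·) (Set.range (Set.Iic : ℝ → Set ℝ)) (Set.range (Set.Iic : ℝ → Set ℝ)))
      (generateFrom_eq_prod hIic hIic hspan hspan).symm
      (isPiSystem_Iic.prod isPiSystem_Iic) ?_ (by simp)
    rintro _ ⟨s, ⟨a, rfl⟩, t, ⟨b, rfl⟩, rfl⟩
    rw [Measure.map_apply hmf' (measurableSet_Iic.prod measurableSet_Iic),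
      Measure.map_apply hmf (measurableSet_Iic.prod measurableSet_Iic)]
    have hpre' : (fun u : ℝ => (royPiece p (roy_inv G1) (roy_inv G0) u,
        royPiece p (fun _ => (1:ℝ)) (fun _ => (0:ℝ)) u)) ⁻¹' (Set.Iic a ×ˢ Set.Iic b)
        = {u : ℝ | royPiece p (roy_inv G1) (roy_inv G0) u ≤ a ∧
            royPiece p (fun _ => (1:ℝ)) (fun _ => (0:ℝ)) u ≤ b} := rfl
    have hpre : (fun ω => (Y ω, D ω)) ⁻¹' (Set.Iic a ×ˢ Set.Iic b)
        = {ω | Y ω ≤ a ∧ D ω ≤ b} := rfl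
    rw [hpre', hpre]
    rcases lt_or_ge b 0 with hb | hb0
    · have h1 : {u : ℝ | royPiece p (roy_inv G1) (roy_inv G0) u ≤ a ∧
          royPiece p (fun _ => (1:ℝ)) (fun _ => (0:ℝ)) u ≤ b} = ∅ := by
        ext u
        simp only [Set.mem_setOf_eq, Set.mem_empty_iff_false, iff_false, not_and]
        intro _ hD'
        rcases hD'bin u with h | h <;> rw [h] at hD' <;> linarith
      have h2 : {ω | Y ω ≤ a ∧ D ω ≤ b} = (∅ : Set Ω) := by
        ext ω
        simp only [Set.mem_setOf_eq, Set.mem_empty_iff_false, iff_false, not_and]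
        intro _ hD'
        rcases hDbin ω with h | h <;> rw [h] at hD' <;> linarith
      rw [h1, h2, measure_empty, measure_empty]
    rcases lt_or_ge b 1 with hb1 | hb1
    · -- 0 ≤ b < 1 : event D' = 0
      have hset : {u : ℝ | royPiece p (roy_inv G1) (roy_inv G0) u ≤ a ∧
            royPiece p (fun _ => (1:ℝ)) (fun _ => (0:ℝ)) u ≤ b} ∩ E
          = ({u : ℝ | royPiece p (roy_inv G1) (roy_inv G0) u ≤ a} ∩ Set.Ioo 0 1) \ Set.Iio p := by
        rw [hEdef]
        ext u
        constructor
        · rintro ⟨⟨hY', hD'⟩, h0, h1⟩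
          refine ⟨⟨hY', h0, h1⟩, fun hup => ?_⟩
          have : royPiece p (fun _ => (1:ℝ)) (fun _ => (0:ℝ)) u = 1 :=
            royPiece_lt h0 h1 hup
          rw [this] at hD'
          linarith
        · rintro ⟨⟨hY', h0, h1⟩, hnp⟩
          have hnp' : ¬ u < p := hnp
          have : royPiece p (fun _ => (1:ℝ)) (fun _ => (0:ℝ)) u = 0 :=
            royPiece_ge h0 h1 hnp'
          exact ⟨⟨hY', by rw [this]; exact hb0⟩, h0, h1⟩
      have hset2 : {ω | Y ω ≤ a ∧ D ω ≤ b} = {ω | Y ω ≤ a ∧ D ω = 0} := by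
        ext ω
        simp only [Set.mem_setOf_eq]
        constructor
        · rintro ⟨h1, h2⟩
          rcases hDbin ω with h | h
          · exact ⟨h1, h⟩
          · rw [h] at h2; linarith
        · rintro ⟨h1, h2⟩
          exact ⟨h1, by rw [h2]; exact hb0⟩
      rw [hPapp, hset, hvY'ge a, hset2]
      rw [hG0y a, ENNReal.ofReal_toReal (hmufin _)]
    · -- b ≥ 1 : no constraint from D'
      have hset : {u : ℝ | royPiece p (roy_inv G1) (roy_inv G0) u ≤ a ∧
            royPiece p (fun _ => (1:ℝ)) (fun _ => (0:ℝ)) u ≤ b}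
          = {u : ℝ | royPiece p (roy_inv G1) (roy_inv G0) u ≤ a} := by
        ext u
        simp only [Set.mem_setOf_eq, and_iff_left_iff_imp]
        intro _
        rcases hD'bin u with h | h <;> rw [h] <;> linarith
      have hset2 : {ω | Y ω ≤ a ∧ D ω ≤ b} = {ω | Y ω ≤ a} := by
        ext ω
        simp only [Set.mem_setOf_eq, and_iff_left_iff_imp]
        intro _
        rcases hDbin ω with h | h <;> rw [h] <;> linarith
      rw [hset, hset2, hPapp, hEdef,
        ← measure_inter_add_diff ({u : ℝ | royPiece p (roy_inv G1) (roy_inv G0) u ≤ a}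
          ∩ Set.Ioo 0 1) (measurableSet_Iio (a := p)),
        hvY'lt a, hvY'ge a]
      have hμa : μ {ω | Y ω ≤ a} = ENNReal.ofReal (G1 a + G0 a) := by
        rw [← htot a, ENNReal.ofReal_toReal (hmufin _)]
      rw [hμa, ENNReal.ofReal_add (hG1nn a) (hG0nn a)]
  -- assemble
  refine ⟨ℝ, inferInstance, P, hProb,
    royPiece p (roy_inv G1) (roy_inv G0),
    royPiece p (fun _ => (1:ℝ)) (fun _ => (0:ℝ)),
    royPiece p (fun u => min (roy_inv H0 u) (roy_inv G1 u)) (roy_inv G0),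
    royPiece p (roy_inv G1) (fun c => min (roy_inv H1 c) (roy_inv G0 c)),
    hmY', hmD', hjoint, hD'bin, hcdf0, hcdf1, ?_, ?_, ?_⟩
  · -- Y' = Y1 * D' + Y0 * (1 - D')
    intro u
    by_cases h1 : 0 < u ∧ u < 1
    · by_cases h2 : u < p
      · rw [royPiece_lt h1.1 h1.2 h2, royPiece_lt h1.1 h1.2 h2, royPiece_lt h1.1 h1.2 h2,
          royPiece_lt h1.1 h1.2 h2]
        ring
      · rw [royPiece_ge h1.1 h1.2 h2, royPiece_ge h1.1 h1.2 h2, royPiece_ge h1.1 h1.2 h2,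
          royPiece_ge h1.1 h1.2 h2]
        ring
    · rw [royPiece_out h1, royPiece_out h1, royPiece_out h1, royPiece_out h1]
      ring
  · -- Y1 > Y0 → D' = 1
    intro u hgt
    by_cases h1 : 0 < u ∧ u < 1
    · by_cases h2 : u < p
      · exact royPiece_lt h1.1 h1.2 h2
      · exfalso
        rw [royPiece_ge h1.1 h1.2 h2, royPiece_ge h1.1 h1.2 h2] at hgt
        exact absurd hgt (not_lt.mpr (min_le_right _ _))
    · exfalso
      rw [royPiece_out h1, royPiece_out h1] at hgt
      exact lt_irrefl _ hgt
  · -- Y0 > Y1 → D' = 0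
    intro u hgt
    by_cases h1 : 0 < u ∧ u < 1
    · by_cases h2 : u < p
      · exfalso
        rw [royPiece_lt h1.1 h1.2 h2, royPiece_lt h1.1 h1.2 h2] at hgt
        exact absurd hgt (not_lt.mpr (min_le_right _ _))
      · exact royPiece_ge h1.1 h1.2 h2
    · exact royPiece_out h1
end

section
/- Under the functional bound hypotheses — F right-continuous nondecreasing with Fd(y2) − Fd(y1) ≥ P(y1 < Y ≤ y2, D=d) for all y1 < y2 and Fd(y) ≥ P(Y ≤ y, D=d) + P(Y ≤ y, D=1−d) for all y, together with Fd(−∞)=0, Fd(+∞)=1 — the function Fd − F̲d (where F̲d(y) = P(Y ≤ y, D=d)) is nondecreasing, right-continuous, satisfies Fd(y) − F̲d(y) ≥ P(Y ≤ y, D=1−d) for all y, and its total mass at +∞ is at least P(D=1−d). -/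
open MeasureTheory Filter

/-- Key lemma in the sharpness construction for functional bounds in the continuous Roy
model: under the functional bound hypotheses, `F − F̲d` (with
`F̲d(y) = P(Y ≤ y, D = d)`) is nondecreasing, right-continuous, dominates
`y ↦ P(Y ≤ y, D = 1−d)` pointwise, and its total mass at `+∞` is at least
`P(D = 1−d)`. -/
theorem roy_sub_cdf_lemma
    {Ω : Type*} [MeasurableSpace Ω] (μ : Measure Ω) [IsProbabilityMeasure μ]
    (Y D : Ω → ℝ) (d : ℝ) (hd : d = 0 ∨ d = 1)
    (F : ℝ → ℝ)
    (hmono : Monotone F)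
    (hrc : ∀ x, ContinuousWithinAt F (Set.Ici x) x)
    (hint : ∀ y1 y2 : ℝ, y1 < y2 →
      F y2 - F y1 ≥ (μ {ω | y1 < Y ω ∧ Y ω ≤ y2 ∧ D ω = d}).toReal)
    (hpt : ∀ y : ℝ, F y ≥ (μ {ω | Y ω ≤ y ∧ D ω = d}).toReal
        + (μ {ω | Y ω ≤ y ∧ D ω = 1 - d}).toReal)
    (hbot : Tendsto F atBot (nhds 0))
    (htop : Tendsto F atTop (nhds 1)) :
    Monotone (fun y => F y - (μ {ω | Y ω ≤ y ∧ D ω = d}).toReal) ∧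
    (∀ x, ContinuousWithinAt (fun y => F y - (μ {ω | Y ω ≤ y ∧ D ω = d}).toReal)
        (Set.Ici x) x) ∧
    (∀ y : ℝ, F y - (μ {ω | Y ω ≤ y ∧ D ω = d}).toReal
        ≥ (μ {ω | Y ω ≤ y ∧ D ω = 1 - d}).toReal) ∧
    (∃ L : ℝ, Tendsto (fun y => F y - (μ {ω | Y ω ≤ y ∧ D ω = d}).toReal) atTop (nhds L)
        ∧ L ≥ (μ {ω | D ω = 1 - d}).toReal) := by
  set G : ℝ → ℝ := fun y => (μ {ω | Y ω ≤ y ∧ D ω = d}).toReal with hG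
  set H : ℝ → ℝ := fun y => F y - G y with hH
  have hGmono : Monotone G := by
    intro y1 y2 h
    exact ENNReal.toReal_mono (measure_ne_top μ _)
      (measure_mono fun ω hω => ⟨hω.1.trans h, hω.2⟩)
  -- Part 1: monotonicity of H
  have hHmono : Monotone H := by
    intro y1 y2 h
    rcases eq_or_lt_of_le h with rfl | hlt
    · exact le_rfl
    have h1 := hint y1 y2 hlt
    have hsub : {ω | Y ω ≤ y2 ∧ D ω = d} ⊆
        {ω | Y ω ≤ y1 ∧ D ω = d} ∪ {ω | y1 < Y ω ∧ Y ω ≤ y2 ∧ D ω = d} := by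
      intro ω hω
      by_cases hc : Y ω ≤ y1
      · exact Or.inl ⟨hc, hω.2⟩
      · exact Or.inr ⟨lt_of_not_ge hc, hω.1, hω.2⟩
    have h2 : μ {ω | Y ω ≤ y2 ∧ D ω = d} ≤
        μ {ω | Y ω ≤ y1 ∧ D ω = d} + μ {ω | y1 < Y ω ∧ Y ω ≤ y2 ∧ D ω = d} :=
      (measure_mono hsub).trans (measure_union_le _ _)
    have h3 : G y2 ≤ G y1 + (μ {ω | y1 < Y ω ∧ Y ω ≤ y2 ∧ D ω = d}).toReal := by
      have := ENNReal.toReal_mono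
        (by exact ENNReal.add_ne_top.2 ⟨measure_ne_top μ _, measure_ne_top μ _⟩) h2
      rwa [ENNReal.toReal_add (measure_ne_top μ _) (measure_ne_top μ _)] at this
    simp only [hH]
    linarith
  -- Part 2: right-continuity of H
  have hHrc : ∀ x, ContinuousWithinAt H (Set.Ici x) x := by
    intro x
    have hup : Tendsto (fun y => H x + (F y - F x)) (nhdsWithin x (Set.Ici x))
        (nhds (H x)) := by
      have : Tendsto (fun y => F y - F x) (nhdsWithin x (Set.Ici x)) (nhds (F x - F x)) :=
        (hrc x).sub tendsto_const_nhds
      simpa using tendsto_const_nhds.add this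
    refine tendsto_of_tendsto_of_tendsto_of_le_of_le' (tendsto_const_nhds) hup ?_ ?_
    · exact eventually_mem_nhdsWithin.mono fun y hy => hHmono hy
    · refine eventually_mem_nhdsWithin.mono fun y hy => ?_
      have h1 : G x ≤ G y := hGmono hy
      simp only [hH]
      linarith
  -- Part 3: pointwise domination
  have hdom : ∀ y : ℝ, H y ≥ (μ {ω | Y ω ≤ y ∧ D ω = 1 - d}).toReal := by
    intro y
    have := hpt y
    simp only [hH, hG]
    linarith
  refine ⟨hHmono, hHrc, hdom, ?_⟩
  -- Part 4
  have hFle : ∀ y, F y ≤ 1 := fun y =>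
    ge_of_tendsto htop (eventually_atTop.2 ⟨y, fun z hz => hmono hz⟩)
  have hHle : ∀ y, H y ≤ 1 := by
    intro y
    have : (0:ℝ) ≤ G y := ENNReal.toReal_nonneg
    have := hFle y
    simp only [hH]
    linarith
  have hbdd : BddAbove (Set.range H) := ⟨1, by rintro _ ⟨y, rfl⟩; exact hHle y⟩
  refine ⟨⨆ y, H y, tendsto_atTop_ciSup hHmono hbdd, ?_⟩
  set L := ⨆ y, H y with hL
  have hHleL : ∀ y, H y ≤ L := fun y => le_ciSup hbdd y
  have hL0 : 0 ≤ L := le_trans (le_trans ENNReal.toReal_nonneg (hdom 0)) (hHleL 0)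
  -- continuity from below
  set s : ℕ → Set Ω := fun n => {ω | Y ω ≤ (n:ℝ) ∧ D ω = 1 - d} with hs
  have hsmono : Monotone s := by
    intro m n hmn ω hω
    exact ⟨hω.1.trans (by exact_mod_cast hmn), hω.2⟩
  have hunion : (⋃ n, s n) = {ω | D ω = 1 - d} := by
    ext ω
    simp only [Set.mem_iUnion, hs, Set.mem_setOf_eq]
    constructor
    · rintro ⟨n, _, h⟩; exact h
    · intro h
      obtain ⟨n, hn⟩ := exists_nat_ge (Y ω)
      exact ⟨n, hn, h⟩
  have hmeq : μ {ω | D ω = 1 - d} = ⨆ n, μ (s n) := by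
    rw [← hunion]
    exact hsmono.directed_le.measure_iUnion
  have hle : μ {ω | D ω = 1 - d} ≤ ENNReal.ofReal L := by
    rw [hmeq]
    refine iSup_le fun n => ?_
    rw [ENNReal.le_ofReal_iff_toReal_le (measure_ne_top μ _) hL0]
    exact le_trans (hdom n) (hHleL n)
  have := ENNReal.toReal_mono ENNReal.ofReal_ne_top hle
  rwa [ENNReal.toReal_ofReal hL0] at this
end

section
/- Under the continuous Roy model assumptions (Y = Y1·D + Y0·(1−D), Y1 > Y0 ⇒ D=1, Y0 > Y1 ⇒ D=0), for all reals y01 < y02 and y11 < y12: P(y01 < Y0 ≤ y02, y11 < Y1 ≤ y12) ≤ P(max(y01,y11) < Y ≤ y02, D=0) + P(max(y01,y11) < Y ≤ y12, D=1), and this upper bound is less than or equal to the Peterson-type bound P(y11 < Y ≤ y02, D=0) + P(y01 < Y ≤ y12, D=1), with strict improvement possible unless y01 = y11. -/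
open MeasureTheory

/-- Improvement on Peterson joint bounds in the continuous Roy model: the improved upper
bound is valid and dominated by the Peterson-type bound in every Roy model, and when
`y01 ≠ y11` strict improvement is possible, i.e. some Roy model makes the improved
bound strictly smaller than the Peterson-type bound. -/
theorem roy_joint_improvement
    (y01 y02 y11 y12 : ℝ) (h0 : y01 < y02) (h1 : y11 < y12) :
    (∀ (Ω : Type) (_ : MeasurableSpace Ω) (μ : Measure Ω), IsProbabilityMeasure μ →
      ∀ Y D Y0 Y1 : Ω → ℝ,
        (∀ ω, D ω = 0 ∨ D ω = 1) →
        (∀ ω, Y ω = Y1 ω * D ω + Y0 ω * (1 - D ω)) →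
        (∀ ω, Y1 ω > Y0 ω → D ω = 1) →
        (∀ ω, Y0 ω > Y1 ω → D ω = 0) →
        μ {ω | y01 < Y0 ω ∧ Y0 ω ≤ y02 ∧ y11 < Y1 ω ∧ Y1 ω ≤ y12}
            ≤ μ {ω | max y01 y11 < Y ω ∧ Y ω ≤ y02 ∧ D ω = 0}
              + μ {ω | max y01 y11 < Y ω ∧ Y ω ≤ y12 ∧ D ω = 1} ∧
          μ {ω | max y01 y11 < Y ω ∧ Y ω ≤ y02 ∧ D ω = 0}
              + μ {ω | max y01 y11 < Y ω ∧ Y ω ≤ y12 ∧ D ω = 1}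
            ≤ μ {ω | y11 < Y ω ∧ Y ω ≤ y02 ∧ D ω = 0}
              + μ {ω | y01 < Y ω ∧ Y ω ≤ y12 ∧ D ω = 1}) ∧
    (y01 ≠ y11 →
      ∃ (Ω : Type) (_ : MeasurableSpace Ω) (μ : Measure Ω),
        IsProbabilityMeasure μ ∧
        ∃ Y D Y0 Y1 : Ω → ℝ,
          (∀ ω, D ω = 0 ∨ D ω = 1) ∧
          (∀ ω, Y ω = Y1 ω * D ω + Y0 ω * (1 - D ω)) ∧
          (∀ ω, Y1 ω > Y0 ω → D ω = 1) ∧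
          (∀ ω, Y0 ω > Y1 ω → D ω = 0) ∧
          μ {ω | max y01 y11 < Y ω ∧ Y ω ≤ y02 ∧ D ω = 0}
              + μ {ω | max y01 y11 < Y ω ∧ Y ω ≤ y12 ∧ D ω = 1}
            < μ {ω | y11 < Y ω ∧ Y ω ≤ y02 ∧ D ω = 0}
              + μ {ω | y01 < Y ω ∧ Y ω ≤ y12 ∧ D ω = 1}) := by
  constructor
  · intro Ω _ μ _ Y D Y0 Y1 hD hY h10 h01
    constructor
    · calc μ {ω | y01 < Y0 ω ∧ Y0 ω ≤ y02 ∧ y11 < Y1 ω ∧ Y1 ω ≤ y12}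
          ≤ μ ({ω | max y01 y11 < Y ω ∧ Y ω ≤ y02 ∧ D ω = 0}
              ∪ {ω | max y01 y11 < Y ω ∧ Y ω ≤ y12 ∧ D ω = 1}) := by
            apply measure_mono
            intro ω hω
            obtain ⟨ha, hb, hc, hd⟩ := hω
            rcases hD ω with hd0 | hd1
            · left
              have hge : Y0 ω ≥ Y1 ω := by
                by_contra hlt
                have := h10 ω (lt_of_not_ge hlt)
                rw [this] at hd0; norm_num at hd0
              have hYeq : Y ω = Y0 ω := by rw [hY ω, hd0]; ring
              exact ⟨by rw [hYeq]; exact max_lt ha (lt_of_lt_of_le hc hge),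
                by rw [hYeq]; exact hb, hd0⟩
            · right
              have hge : Y1 ω ≥ Y0 ω := by
                by_contra hlt
                have := h01 ω (lt_of_not_ge hlt)
                rw [this] at hd1; norm_num at hd1
              have hYeq : Y ω = Y1 ω := by rw [hY ω, hd1]; ring
              exact ⟨by rw [hYeq]; exact max_lt (lt_of_lt_of_le ha hge) hc,
                by rw [hYeq]; exact hd, hd1⟩
        _ ≤ _ := measure_union_le _ _
    · exact add_le_add
        (measure_mono (by rintro ω ⟨ha, hb, hc⟩
                          exact ⟨(le_max_right _ _).trans_lt ha, hb, hc⟩))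
        (measure_mono (by rintro ω ⟨ha, hb, hc⟩
                          exact ⟨(le_max_left _ _).trans_lt ha, hb, hc⟩))
  · intro hne
    rcases lt_or_gt_of_ne hne with hlt | hgt
    · -- y01 < y11 : put mass at c = min y11 y12 with D = 1
      set c := min y11 y12 with hc
      refine ⟨Unit, inferInstance, Measure.dirac (), inferInstance,
        fun _ => c, fun _ => 1, fun _ => c, fun _ => c,
        fun _ => Or.inr rfl, fun _ => by ring, fun _ h => absurd h (lt_irrefl _),
        fun _ h => absurd h (lt_irrefl _), ?_⟩
      have hA : () ∉ {ω : Unit | max y01 y11 < c ∧ c ≤ y02 ∧ (1:ℝ) = 0} :=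
        fun h => one_ne_zero h.2.2
      have hA' : () ∉ {ω : Unit | y11 < c ∧ c ≤ y02 ∧ (1:ℝ) = 0} :=
        fun h => one_ne_zero h.2.2
      have hB : () ∉ {ω : Unit | max y01 y11 < c ∧ c ≤ y12 ∧ (1:ℝ) = 1} :=
        fun h => absurd (lt_of_le_of_lt (le_max_right _ _) h.1) (not_lt.2 (min_le_left _ _))
      have hB' : () ∈ {ω : Unit | y01 < c ∧ c ≤ y12 ∧ (1:ℝ) = 1} :=
        ⟨lt_min hlt (hlt.trans h1), min_le_right _ _, rfl⟩
      simp only [Measure.dirac_apply, Set.indicator_of_notMem hA,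
        Set.indicator_of_notMem hA', Set.indicator_of_notMem hB,
        Set.indicator_of_mem hB', Pi.one_apply, add_zero, zero_add]
      rw [Set.indicator_of_notMem
          (show () ∉ {ω : Unit | max y01 y11 < c ∧ c ≤ y12 ∧ True} from
            fun h => absurd ((le_max_right _ _).trans_lt h.1) (not_lt.2 (min_le_left y11 y12))),
        Set.indicator_of_mem
          (show () ∈ {ω : Unit | y01 < c ∧ c ≤ y12 ∧ True} from
            ⟨lt_min hlt (hlt.trans h1), min_le_right _ _, trivial⟩)]
      exact zero_lt_one
    · -- y11 < y01 : put mass at c = min y01 y02 with D = 0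
      set c := min y01 y02 with hc
      refine ⟨Unit, inferInstance, Measure.dirac (), inferInstance,
        fun _ => c, fun _ => 0, fun _ => c, fun _ => c,
        fun _ => Or.inl rfl, fun _ => by ring, fun _ h => absurd h (lt_irrefl _),
        fun _ h => absurd h (lt_irrefl _), ?_⟩
      have hA : () ∉ {ω : Unit | max y01 y11 < c ∧ c ≤ y02 ∧ (0:ℝ) = 0} :=
        fun h => absurd (lt_of_le_of_lt (le_max_left _ _) h.1) (not_lt.2 (min_le_left _ _))
      have hA' : () ∈ {ω : Unit | y11 < c ∧ c ≤ y02 ∧ (0:ℝ) = 0} :=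
        ⟨lt_min hgt (hgt.trans h0), min_le_right _ _, rfl⟩
      have hB : () ∉ {ω : Unit | max y01 y11 < c ∧ c ≤ y12 ∧ (0:ℝ) = 1} :=
        fun h => zero_ne_one h.2.2
      have hB' : () ∉ {ω : Unit | y01 < c ∧ c ≤ y12 ∧ (0:ℝ) = 1} :=
        fun h => zero_ne_one h.2.2
      simp only [Measure.dirac_apply, Set.indicator_of_notMem hA,
        Set.indicator_of_mem hA', Set.indicator_of_notMem hB,
        Set.indicator_of_notMem hB', Pi.one_apply, add_zero, zero_add]
      rw [Set.indicator_of_notMem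
          (show () ∉ {ω : Unit | max y01 y11 < c ∧ c ≤ y02 ∧ True} from
            fun h => absurd ((le_max_left _ _).trans_lt h.1) (not_lt.2 (min_le_left y01 y02))),
        Set.indicator_of_mem
          (show () ∈ {ω : Unit | y11 < c ∧ c ≤ y02 ∧ True} from
            ⟨lt_min hgt (hgt.trans h0), min_le_right _ _, trivial⟩)]
      exact zero_lt_one
end

section
/- Let Y, D, Y0, Y1 be {0,1}-valued with Y = Y1·D + Y0·(1−D) and Roy selection (Y1 > Y0 ⇒ D=1, Y0 > Y1 ⇒ D=0), and suppose P(Y=1,D=0) < 1. Then P(Y1 = 1 | Y0 = 0) ≤ P(Y=1, D=1) / (1 − P(Y=1, D=0)), provided P(Y0 = 0) > 0. -/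
open MeasureTheory

/-- Conditional success-probability bound in the binary Roy model:
`P(Y1 = 1 | Y0 = 0) ≤ P(Y = 1, D = 1) / (1 − P(Y = 1, D = 0))`. -/
theorem binary_roy_conditional_bound
    {Ω : Type*} [MeasurableSpace Ω] (μ : Measure Ω) [IsProbabilityMeasure μ]
    (Y D Y0 Y1 : Ω → ℝ)
    (hYbin : ∀ ω, Y ω = 0 ∨ Y ω = 1)
    (hDbin : ∀ ω, D ω = 0 ∨ D ω = 1)
    (hY0bin : ∀ ω, Y0 ω = 0 ∨ Y0 ω = 1)
    (hY1bin : ∀ ω, Y1 ω = 0 ∨ Y1 ω = 1)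
    (hout : ∀ ω, Y ω = Y1 ω * D ω + Y0 ω * (1 - D ω))
    (hsel1 : ∀ ω, Y1 ω > Y0 ω → D ω = 1)
    (hsel0 : ∀ ω, Y0 ω > Y1 ω → D ω = 0)
    (h10lt : (μ {ω | Y ω = 1 ∧ D ω = 0}).toReal < 1)
    (hpos : 0 < (μ {ω | Y0 ω = 0}).toReal) :
    (μ {ω | Y1 ω = 1 ∧ Y0 ω = 0}).toReal / (μ {ω | Y0 ω = 0}).toReal
      ≤ (μ {ω | Y ω = 1 ∧ D ω = 1}).toReal
        / (1 - (μ {ω | Y ω = 1 ∧ D ω = 0}).toReal) := by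
  set sA : Set Ω := {ω | Y1 ω = 1 ∧ Y0 ω = 0} with hsA
  set sB : Set Ω := {ω | Y0 ω = 0} with hsB
  set sC : Set Ω := {ω | Y ω = 1 ∧ D ω = 1} with hsC
  set sD : Set Ω := {ω | Y ω = 1 ∧ D ω = 0} with hsD
  -- pointwise inclusions
  have hAC : sA ⊆ sC := by
    intro ω hω
    obtain ⟨h1, h0⟩ := hω
    have hD : D ω = 1 := hsel1 ω (by rw [h1, h0]; norm_num)
    refine ⟨?_, hD⟩
    rw [hout ω, h1, h0, hD]; ring
  have hAB : sA ⊆ sB := fun ω hω => hω.2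
  have hDc : sDᶜ ⊆ sC ∪ sB := by
    intro ω hω
    simp only [hsD, Set.mem_compl_iff, Set.mem_setOf_eq, not_and] at hω
    rcases hDbin ω with hD | hD
    · -- D = 0, Y = Y0
      have hYY0 : Y ω = Y0 ω := by rw [hout ω, hD]; ring
      rcases hY0bin ω with h0 | h0
      · exact Or.inr h0
      · exact (hω (by rw [hYY0, h0]) hD).elim
    · -- D = 1, Y = Y1
      have hYY1 : Y ω = Y1 ω := by rw [hout ω, hD]; ring
      rcases hY1bin ω with h1 | h1
      · -- Y1 = 0 so Y0 = 0 (else D = 0)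
        rcases hY0bin ω with h0 | h0
        · exact Or.inr h0
        · have : D ω = 0 := hsel0 ω (by rw [h0, h1]; norm_num)
          rw [this] at hD; norm_num at hD
      · exact Or.inl ⟨by rw [hYY1, h1], hD⟩
  -- measurable hulls
  set X : Set Ω := toMeasurable μ sC with hX
  set Y' : Set Ω := toMeasurable μ sB with hY'
  have hXm : MeasurableSet X := measurableSet_toMeasurable μ sC
  have hY'm : MeasurableSet Y' := measurableSet_toMeasurable μ sB
  have hXs : μ X = μ sC := measure_toMeasurable sC
  have hY's : μ Y' = μ sB := measure_toMeasurable sB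
  -- key measure inequalities (in ENNReal)
  have hfin : ∀ s : Set Ω, μ s ≠ ⊤ := fun s => (measure_lt_top μ s).ne
  have h1 : μ sA ≤ μ sC := measure_mono hAC
  have h2 : μ sA ≤ μ sB := measure_mono hAB
  have hsum : μ (X ∪ Y') + μ (X ∩ Y') = μ X + μ Y' := measure_union_add_inter X hY'm
  have hAXY : μ sA ≤ μ (X ∩ Y') :=
    measure_mono (Set.subset_inter (hAC.trans (subset_toMeasurable μ sC))
      (hAB.trans (subset_toMeasurable μ sB)))
  have hcover : (1 : ENNReal) ≤ μ sD + μ (X ∪ Y') := by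
    have : μ (Set.univ : Set Ω) ≤ μ sD + μ sDᶜ := by
      rw [← Set.union_compl_self sD]; exact measure_union_le _ _
    calc (1 : ENNReal) = μ (Set.univ : Set Ω) := (measure_univ).symm
      _ ≤ μ sD + μ sDᶜ := this
      _ ≤ μ sD + μ (X ∪ Y') := by
          gcongr
          exact hDc.trans (Set.union_subset_union (subset_toMeasurable μ sC)
            (subset_toMeasurable μ sB))
  -- pass to reals
  set a := (μ sA).toReal with ha
  set b := (μ sB).toReal with hb
  set c := (μ sC).toReal with hc
  set d := (μ sD).toReal with hd
  set u := (μ (X ∪ Y')).toReal with hu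
  set v := (μ (X ∩ Y')).toReal with hv
  have h1r : a ≤ c := ENNReal.toReal_le_toReal (hfin _) (hfin _) |>.mpr h1
  have h2r : a ≤ b := ENNReal.toReal_le_toReal (hfin _) (hfin _) |>.mpr h2
  have hAr : a ≤ v := ENNReal.toReal_le_toReal (hfin _) (hfin _) |>.mpr hAXY
  have hsumr : u + v = c + b := by
    have := congrArg ENNReal.toReal hsum
    rwa [ENNReal.toReal_add (hfin _) (hfin _), ENNReal.toReal_add (hfin _) (hfin _),
      hXs, hY's] at this
  have hcoverr : (1 : ℝ) ≤ d + u := by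
    have := ENNReal.toReal_le_toReal (by norm_num) (ENNReal.add_ne_top.mpr ⟨hfin _, hfin _⟩)
      |>.mpr hcover
    rwa [ENNReal.toReal_one, ENNReal.toReal_add (hfin _) (hfin _)] at this
  have ha0 : 0 ≤ a := ENNReal.toReal_nonneg
  have hc0 : 0 ≤ c := ENNReal.toReal_nonneg
  have hd0 : 0 ≤ d := ENNReal.toReal_nonneg
  have hm : (0 : ℝ) < 1 - d := by linarith
  rw [div_le_div_iff₀ hpos hm]
  -- goal : a * (1 - d) ≤ c * b
  have hkey : a + (1 - d) ≤ c + b := by linarith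
  rcases le_total (1 - d) c with hmc | hmc
  · nlinarith
  · rcases le_total (1 - d) b with hmb | hmb
    · nlinarith
    · nlinarith [mul_nonneg (sub_nonneg.mpr hmc) (sub_nonneg.mpr hmb)]
end

section
/- Under the generalized binary Roy model with instrument Z ((Y0,Y1) ⫫ Z, Y = Y1·D + Y0·(1−D), all binary), for every z with P(Y=0, D=0 | Z=z) > 0 and P(Y0=0, D=0 | Z=z) > 0: P(Y1=1 | Y0=0, D=0, Z=z) ≤ q̲{00-11} / P(Y=0, D=0 | Z=z), where q̲{00-11} = inf_{z'} [P(Y=0,D=0|Z=z') + P(Y=1,D=1|Z=z')]. -/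
open MeasureTheory

/-- Ex-post regret bound in the generalized binary Roy model with instrument:
`P(Y1 = 1 | Y0 = 0, D = 0, Z = z) ≤ q̲_{00-11} / P(Y = 0, D = 0 | Z = z)`.
`μZ z` is the conditional law given `Z = z` and `S` the support of `Z`; independence
of `(Y0, Y1)` from `Z` says the conditional joint law of `(Y0, Y1)` does not depend
on `z`. -/
theorem gen_roy_ex_post_regret
    {Ω : Type*} [MeasurableSpace Ω]
    (μZ : ℝ → Measure Ω) (S : Set ℝ) (hS : S.Nonempty)
    (hprob : ∀ z ∈ S, IsProbabilityMeasure (μZ z))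
    (Y D Y0 Y1 : Ω → ℝ)
    (hYbin : ∀ ω, Y ω = 0 ∨ Y ω = 1)
    (hDbin : ∀ ω, D ω = 0 ∨ D ω = 1)
    (hY0bin : ∀ ω, Y0 ω = 0 ∨ Y0 ω = 1)
    (hY1bin : ∀ ω, Y1 ω = 0 ∨ Y1 ω = 1)
    (hout : ∀ ω, Y ω = Y1 ω * D ω + Y0 ω * (1 - D ω))
    (hindep : ∀ z ∈ S, ∀ z' ∈ S, ∀ k l : ℝ,
      μZ z {ω | Y0 ω = k ∧ Y1 ω = l} = μZ z' {ω | Y0 ω = k ∧ Y1 ω = l}) :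
    ∀ z ∈ S,
      0 < (μZ z {ω | Y ω = 0 ∧ D ω = 0}).toReal →
      0 < (μZ z {ω | Y0 ω = 0 ∧ D ω = 0}).toReal →
      (μZ z {ω | Y1 ω = 1 ∧ Y0 ω = 0 ∧ D ω = 0}).toReal
          / (μZ z {ω | Y0 ω = 0 ∧ D ω = 0}).toReal
        ≤ sInf ((fun z' => (μZ z' {ω | Y ω = 0 ∧ D ω = 0}).toReal
              + (μZ z' {ω | Y ω = 1 ∧ D ω = 1}).toReal) '' S)
          / (μZ z {ω | Y ω = 0 ∧ D ω = 0}).toReal := by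
  intro z hz h1 h2
  have hfin : ∀ z' ∈ S, ∀ s : Set Ω, μZ z' s ≠ ⊤ := by
    intro z' hz' s
    have := hprob z' hz'
    exact (measure_lt_top _ _).ne
  -- On {D = 0}, Y = Y0
  have hset : {ω | Y ω = 0 ∧ D ω = 0} = {ω | Y0 ω = 0 ∧ D ω = 0} := by
    ext ω
    simp only [Set.mem_setOf_eq]
    constructor
    · rintro ⟨hY, hD⟩
      refine ⟨?_, hD⟩
      have := hout ω
      rw [hD] at this
      simp at this
      rw [hY] at this; linarith
    · rintro ⟨hY0, hD⟩
      refine ⟨?_, hD⟩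
      have := hout ω
      rw [hD] at this
      simp [hY0] at this
      linarith
  rw [hset]
  apply div_le_div_of_nonneg_right ?_ ?_
  · -- numerator bound ≤ sInf
    apply le_csInf (hS.image _)
    rintro _ ⟨z', hz', rfl⟩
    -- μZ z {Y1=1 ∧ Y0=0 ∧ D=0} ≤ μZ z {Y0=0 ∧ Y1=1} = μZ z' {Y0=0 ∧ Y1=1}
    have step1 : μZ z {ω | Y1 ω = 1 ∧ Y0 ω = 0 ∧ D ω = 0}
        ≤ μZ z {ω | Y0 ω = 0 ∧ Y1 ω = 1} := by
      apply measure_mono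
      rintro ω ⟨h1', h0, _⟩; exact ⟨h0, h1'⟩
    have step2 : μZ z {ω | Y0 ω = 0 ∧ Y1 ω = 1}
        = μZ z' {ω | Y0 ω = 0 ∧ Y1 ω = 1} := hindep z hz z' hz' 0 1
    have step3 : μZ z' {ω | Y0 ω = 0 ∧ Y1 ω = 1}
        ≤ μZ z' {ω | Y ω = 0 ∧ D ω = 0} + μZ z' {ω | Y ω = 1 ∧ D ω = 1} := by
      refine le_trans (measure_mono ?_) (measure_union_le _ _)
      rintro ω ⟨h0, h1'⟩
      rcases hDbin ω with hD | hD
      · left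
        refine ⟨?_, hD⟩
        have := hout ω
        rw [hD] at this; simp [h0] at this; exact this
      · right
        refine ⟨?_, hD⟩
        have := hout ω
        rw [hD] at this; simp [h1'] at this; exact this
    calc (μZ z {ω | Y1 ω = 1 ∧ Y0 ω = 0 ∧ D ω = 0}).toReal
        ≤ (μZ z' {ω | Y ω = 0 ∧ D ω = 0} + μZ z' {ω | Y ω = 1 ∧ D ω = 1}).toReal := by
          apply ENNReal.toReal_mono
          · exact ENNReal.add_ne_top.2 ⟨hfin z' hz' _, hfin z' hz' _⟩
          · exact le_trans step1 (step2 ▸ step3)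
      _ = (μZ z' {ω | Y ω = 0 ∧ D ω = 0}).toReal
            + (μZ z' {ω | Y ω = 1 ∧ D ω = 1}).toReal :=
          ENNReal.toReal_add (hfin z' hz' _) (hfin z' hz' _)
      _ = (μZ z' {ω | Y0 ω = 0 ∧ D ω = 0}).toReal
            + (μZ z' {ω | Y ω = 1 ∧ D ω = 1}).toReal := by rw [hset]
  · exact h2.le
end
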